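/- arXiv:math/0611190 — 4 statements merged into one kernel-verified Lean document; each statement's English description precedes it below -/
import Mathlib

section
/- For every integer k ≥ 1 and every integer α ≥ 2, the k-th moment of M₁ satisfies the exact identity E M₁^k = W^{k−1} · (α/x)^{2(k−1)} · [(k(α−2)+1)! / ((α−1)!)^k] · k^{−(k(α−2)+2)} · ∫₀^∞ h_{α,x,k}(y) f(y) dy. -/
open MeasureTheory ProbabilityTheory Filter
open scoped Topology ENNReal NNReal Real

theorem stmt_1
    {Ω : Type*} [MeasurableSpace Ω] (P : Measure Ω) [IsProbabilityMeasure P]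
    (f f' f'' : ℝ → ℝ)
    (hf_nonneg : ∀ y ∈ Set.Ici (0:ℝ), 0 ≤ f y)
    (hf_int : ∫ y in Set.Ioi (0:ℝ), f y = 1)
    (hf_deriv : ∀ t ∈ Set.Ici (0:ℝ), HasDerivWithinAt f (f' t) (Set.Ici 0) t)
    (hf_deriv2 : ∀ t ∈ Set.Ici (0:ℝ), HasDerivWithinAt f' (f'' t) (Set.Ici 0) t)
    (hf''_cont : ContinuousOn f'' (Set.Ici 0))
    (hf''_bdd : ∃ C : ℝ, ∀ t ∈ Set.Ici (0:ℝ), |f'' t| ≤ C)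
    (W : ℝ) (hW_pos : 0 < W)
    (hW_int : IntegrableOn (fun y => y * f y) (Set.Ioi 0) volume)
    (hW : W = ∫ y in Set.Ioi (0:ℝ), y * f y)
    (g : ℝ → ℝ) (hg : ∀ y, g y = y * f y / W)
    (Y : ℕ → Ω → ℝ)
    (hY_meas : ∀ i, Measurable (Y i))
    (hY_indep : iIndepFun Y P)
    (hY_law : ∀ i, P.map (Y i)
      = (volume.restrict (Set.Ioi 0)).withDensity (fun y => ENNReal.ofReal (g y)))
    (x : ℝ) (hx : 0 < x) (hfx : 0 < f x)
    (M : ℕ → ℕ → Ω → ℝ)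
    (hM : ∀ (α i : ℕ) (ω : Ω), M α i ω
      = W / (Y i ω) ^ 2 * (1 / Real.Gamma (α : ℝ)) * ((α : ℝ) * Y i ω / x) ^ α
        * Real.exp (-((α : ℝ) * Y i ω / x)))
    (k α : ℕ) (hk : 1 ≤ k) (hα : 2 ≤ α) :
    ∫ ω, (M α 0 ω) ^ k ∂P
      = W ^ (k - 1) * ((α : ℝ) / x) ^ (2 * (k - 1))
        * ((Nat.factorial (k * (α - 2) + 1) : ℝ) / (Nat.factorial (α - 1) : ℝ) ^ k)
        * (1 / (k : ℝ) ^ (k * (α - 2) + 2))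
        * ∫ y in Set.Ioi (0:ℝ),
            (((k * α : ℕ) : ℝ) / x) ^ (k * (α - 2) + 2) * y ^ (k * (α - 2) + 1)
              * Real.exp (-(((k * α : ℕ) : ℝ) * y / x))
              / (Nat.factorial (k * (α - 2) + 1) : ℝ) * f y := by
  obtain ⟨m, rfl⟩ : ∃ m, k = m + 1 := ⟨k - 1, by omega⟩
  obtain ⟨β, rfl⟩ : ∃ β, α = β + 2 := ⟨α - 2, by omega⟩
  set F : ℝ → ℝ := fun y => W / y ^ 2 * (1 / Real.Gamma ((β + 2 : ℕ) : ℝ))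
      * (((β + 2 : ℕ) : ℝ) * y / x) ^ (β + 2)
      * Real.exp (-(((β + 2 : ℕ) : ℝ) * y / x)) with hF
  have hFmeas : Measurable F := by
    apply Measurable.mul
    apply Measurable.mul
    apply Measurable.mul
    · exact measurable_const.div (measurable_id.pow_const 2)
    · exact measurable_const
    · exact ((measurable_const.mul measurable_id).div measurable_const).pow_const _
    · exact (((measurable_const.mul measurable_id).div measurable_const).neg).exp
  have hfc : ContinuousOn f (Set.Ici 0) := fun t ht => (hf_deriv t ht).continuousWithinAt
  have hg_ae : AEMeasurable (fun y => Real.toNNReal (g y)) (volume.restrict (Set.Ioi 0)) := by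
    have hgc : ContinuousOn g (Set.Ioi 0) := by
      have : ContinuousOn g (Set.Ici 0) := by
        have := (continuousOn_id.mul hfc).div_const W
        refine this.congr fun y hy => ?_
        simp [hg y]
      exact this.mono Set.Ioi_subset_Ici_self
    exact (hgc.aemeasurable measurableSet_Ioi).real_toNNReal
  have h1 : ∫ ω, (M (β + 2) 0 ω) ^ (m + 1) ∂P
      = ∫ y in Set.Ioi (0:ℝ), (Real.toNNReal (g y) : ℝ) • (F y) ^ (m + 1) := by
    have : ∫ ω, (M (β + 2) 0 ω) ^ (m + 1) ∂P = ∫ ω, (F (Y 0 ω)) ^ (m + 1) ∂P := by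
      refine integral_congr_ae (Filter.Eventually.of_forall fun ω => ?_)
      simp only [hM]
      rfl
    rw [this, ← integral_map (hY_meas 0).aemeasurable
        ((hFmeas.pow_const (m+1)).aestronglyMeasurable), hY_law 0]
    have : (fun y => ENNReal.ofReal (g y))
        = fun y => ((Real.toNNReal (g y) : ℝ≥0) : ℝ≥0∞) := rfl
    rw [this, integral_withDensity_eq_integral_smul₀ hg_ae]
    rfl
  rw [h1, ← integral_const_mul]
  refine setIntegral_congr_fun measurableSet_Ioi fun y hy => ?_
  have hy0 : 0 < y := hy
  have hgy : 0 ≤ g y := by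
    rw [hg]
    exact div_nonneg (mul_nonneg hy0.le (hf_nonneg y hy0.le)) hW_pos.le
  rw [smul_eq_mul, Real.coe_toNNReal _ hgy, hg]
  simp only [Nat.add_sub_cancel, hF]
  have hGamma : Real.Gamma ((β + 2 : ℕ) : ℝ) = (Nat.factorial (β + 1) : ℝ) := by
    rw [show ((β + 2 : ℕ) : ℝ) = ((β + 1 : ℕ) : ℝ) + 1 by push_cast; ring,
      Real.Gamma_nat_eq_factorial]
  have hexp : Real.exp (-(((β + 2 : ℕ) : ℝ) * y / x)) ^ (m + 1)
      = Real.exp (-((((m + 1) * (β + 2) : ℕ) : ℝ) * y / x)) := by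
    rw [← Real.exp_nat_mul]
    congr 1
    push_cast
    ring
  have h2 : ((β + 1 : ℕ).factorial : ℝ) ≠ 0 := Nat.cast_ne_zero.mpr (Nat.factorial_ne_zero _)
  have h3 : (((m + 1) * β + 1 : ℕ).factorial : ℝ) ≠ 0 :=
    Nat.cast_ne_zero.mpr (Nat.factorial_ne_zero _)
  have h4 : ((m + 1 : ℕ) : ℝ) ≠ 0 := Nat.cast_ne_zero.mpr (by omega)
  rw [hGamma, mul_pow, mul_pow, mul_pow, hexp,
    show ((((m + 1) * (β + 2) : ℕ)) : ℝ) = ((m + 1 : ℕ) : ℝ) * ((β + 2 : ℕ) : ℝ) by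
      push_cast; ring]
  generalize ((β + 2 : ℕ) : ℝ) = A
  generalize ((m + 1 : ℕ) : ℝ) = K at h4 ⊢
  generalize Real.exp (-(K * A * y / x)) = E
  have hy' : y ≠ 0 := hy0.ne'
  simp only [show β + 2 - 1 = β + 1 by omega]
  field_simp
  simp only [div_pow, one_div, inv_pow]
  field_simp
  ring
end

section
/- (Theorem 3.1, bias part) As the integer α → ∞, the bias of the moment-density estimator satisfies E f̂*_α(x) − f(x) = x² f''(x)/(2α) + o(1/α); equivalently, α · (f_α(x) − f(x)) → x² f''(x)/2, where f_α(x) = ∫₀^∞ h_{α,x,1}(y) f(y) dy. -/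
open MeasureTheory ProbabilityTheory Filter
open scoped Topology ENNReal NNReal Real

open Set in
lemma stmt2_L1 (c : ℝ) (hc : 0 < c) (n : ℕ) :
    ∫ y in Ioi (0:ℝ), y ^ n * Real.exp (-(c * y)) = (Nat.factorial n : ℝ) / c ^ (n+1) := by
  have h := Real.integral_rpow_mul_exp_neg_mul_Ioi (a := (n:ℝ)+1) (by positivity) hc
  rw [show ((n:ℝ)+1)-1 = (n:ℝ) by ring] at h
  simp_rw [Real.rpow_natCast] at h
  rw [h, show ((n:ℝ)+1) = ((n+1:ℕ):ℝ) by push_cast; ring, Real.rpow_natCast]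
  push_cast
  rw [Real.Gamma_nat_eq_factorial]
  field_simp
  rw [← mul_pow, one_div_mul_cancel hc.ne', one_pow]

open Set in
lemma stmt2_L2 (c : ℝ) (hc : 0 < c) (n : ℕ) :
    IntegrableOn (fun y => y ^ n * Real.exp (-(c * y))) (Ioi (0:ℝ)) := by
  have h := integrableOn_rpow_mul_exp_neg_mul_rpow (s := (n:ℝ)) (p := 1)
    (neg_one_lt_zero.trans_le (Nat.cast_nonneg n)) one_pos hc
  refine h.congr_fun (fun y hy => ?_) measurableSet_Ioi
  dsimp only
  rw [Real.rpow_natCast, Real.rpow_one, neg_mul]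

lemma stmt2_L3 (c : ℝ) (hc : 0 < c) (n : ℕ) (y : ℝ) (hy : 0 ≤ y) :
    y ^ n * Real.exp (-(c * y)) ≤ (Nat.factorial n : ℝ) / c ^ n := by
  have h1 : (c*y) ^ n / (Nat.factorial n : ℝ) ≤ Real.exp (c*y) := by
    calc (c*y) ^ n / (Nat.factorial n : ℝ)
        ≤ ∑ i ∈ Finset.range (n+1), (c*y) ^ i / (Nat.factorial i : ℝ) :=
          Finset.single_le_sum (f := fun i => (c*y)^i / (Nat.factorial i : ℝ))
            (fun i _ => by positivity) (Finset.self_mem_range_succ n)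
      _ ≤ Real.exp (c*y) := Real.sum_le_exp_of_nonneg (by positivity) _
  rw [div_le_iff₀ (by positivity)] at h1
  have key : y^n * c^n ≤ (Nat.factorial n : ℝ) * Real.exp (c*y) := by
    calc y^n * c^n = (c*y)^n := by ring
      _ ≤ Real.exp (c*y) * (Nat.factorial n : ℝ) := h1
      _ = (Nat.factorial n : ℝ) * Real.exp (c*y) := mul_comm _ _
  rw [Real.exp_neg, mul_inv_le_iff₀ (Real.exp_pos _), div_mul_eq_mul_div,
    le_div_iff₀ (by positivity : (0:ℝ) < c^n)]
  exact key

open Set in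
lemma stmt2_mvt_abs {F G : ℝ → ℝ} {s : Set ℝ} (hs : Convex ℝ s)
    (hd : ∀ t ∈ s, HasDerivWithinAt F (G t) s t) {K x y : ℝ}
    (hK : ∀ t ∈ s, |G t| ≤ K) (hxs : x ∈ s) (hys : y ∈ s) :
    |F y - F x| ≤ K * |y - x| := by
  have := hs.norm_image_sub_le_of_norm_hasDerivWithin_le hd
    (fun t ht => (hK t ht).trans_eq rfl) hxs hys
  simpa [Real.norm_eq_abs] using this

open Set in
lemma stmt2_abs_sub_le_uIcc {x y t : ℝ} (ht : t ∈ uIcc x y) : |t - x| ≤ |y - x| := by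
  rw [Set.mem_uIcc] at ht
  rcases ht with ⟨h1, h2⟩ | ⟨h1, h2⟩
  · rw [abs_of_nonneg (by linarith), abs_of_nonneg (by linarith)]; linarith
  · rw [abs_of_nonpos (by linarith), abs_of_nonpos (by linarith)]; linarith

open Set in
lemma stmt2_uIcc_subset_Ici {x y : ℝ} (hx : (0:ℝ) ≤ x) (hy : 0 ≤ y) :
    uIcc x y ⊆ Ici 0 :=
  fun t ht => le_trans (le_inf hx hy) ht.1

open Set in
lemma stmt2_taylor1 {f f' f'' : ℝ → ℝ}
    (hf_deriv : ∀ t ∈ Ici (0:ℝ), HasDerivWithinAt f (f' t) (Ici 0) t)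
    (hf_deriv2 : ∀ t ∈ Ici (0:ℝ), HasDerivWithinAt f' (f'' t) (Ici 0) t)
    {x : ℝ} (hx : 0 ≤ x) {y : ℝ} (hy : 0 ≤ y) {ε : ℝ}
    (hb : ∀ t ∈ uIcc x y, |f'' t - f'' x| ≤ ε) :
    |f y - f x - f' x * (y - x) - f'' x / 2 * (y - x)^2| ≤ ε * (y - x)^2 := by
  have hsub : uIcc x y ⊆ Ici 0 := stmt2_uIcc_subset_Ici hx hy
  have hε : 0 ≤ ε := (abs_nonneg _).trans (hb x left_mem_uIcc)
  have step1 : ∀ t ∈ uIcc x y, |f' t - f' x - f'' x * (t - x)| ≤ ε * |t - x| := by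
    intro t ht
    have hts : uIcc x t ⊆ uIcc x y := Set.uIcc_subset_uIcc left_mem_uIcc ht
    have key := stmt2_mvt_abs (F := fun u => f' u - f'' x * u) (G := fun u => f'' u - f'' x)
      (s := uIcc x t) (convex_uIcc _ _)
      (fun u hu => by
        have hA := (hf_deriv2 u (hsub (hts hu))).mono (hts.trans hsub)
        have hB : HasDerivWithinAt (fun v : ℝ => f'' x * v) (f'' x) (uIcc x t) u := by
          simpa using (hasDerivWithinAt_id u (uIcc x t)).const_mul (f'' x)
        exact hA.sub hB)
      (K := ε) (fun u hu => hb u (hts hu)) left_mem_uIcc right_mem_uIcc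
    have e : f' t - f'' x * t - (f' x - f'' x * x) = f' t - f' x - f'' x * (t - x) := by ring
    rw [e] at key
    exact key
  have step2 := stmt2_mvt_abs (F := fun t => f t - f' x * t - f'' x * (t-x)^2 / 2)
    (G := fun t => f' t - f' x - f'' x * (t - x)) (s := uIcc x y) (convex_uIcc _ _)
    (fun t ht => by
      have h1 : HasDerivWithinAt (fun t : ℝ => f'' x * (t-x)^2/2) (f'' x * (t-x)) (uIcc x y) t := by
        have h := ((((hasDerivAt_id t).sub_const x).pow 2).const_mul
          (f'' x / 2)).hasDerivWithinAt (s := uIcc x y)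
        have e1 : (fun t:ℝ => f'' x/2 * (t-x)^2) = fun t => f'' x * (t-x)^2/2 := by
          funext u; ring
        simp only [id_eq, Pi.pow_apply] at h
        rw [e1] at h
        exact h.congr_deriv (by push_cast; ring)
      have hB : HasDerivWithinAt (fun v : ℝ => f' x * v) (f' x) (uIcc x y) t := by
        simpa using (hasDerivWithinAt_id t (uIcc x y)).const_mul (f' x)
      exact (((hf_deriv t (hsub ht)).mono hsub).sub hB).sub h1)
    (K := ε * |y - x|)
    (fun t ht => (step1 t ht).trans
      (mul_le_mul_of_nonneg_left (stmt2_abs_sub_le_uIcc ht) hε))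
    left_mem_uIcc right_mem_uIcc
  have e : f y - f' x * y - f'' x * (y-x)^2/2 - (f x - f' x * x - f'' x * (x-x)^2/2)
      = f y - f x - f' x * (y - x) - f'' x / 2 * (y - x)^2 := by ring
  rw [e] at step2
  refine step2.trans ?_
  rw [mul_assoc, abs_mul_abs_self, ← sq]

noncomputable def stmt2_hh (β : ℕ) (x : ℝ) (y : ℝ) : ℝ :=
  (((β:ℝ)+1)/x)^(β+1) * y^β * Real.exp (-((((β:ℝ)+1)/x) * y)) / (Nat.factorial β)

open Set in
lemma stmt2_hh_int (β k : ℕ) {x : ℝ} (hx : 0 < x) :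
    IntegrableOn (fun y => stmt2_hh β x y * y^k) (Ioi (0:ℝ)) := by
  have hc : (0:ℝ) < ((β:ℝ)+1)/x := by positivity
  have e : (fun y => stmt2_hh β x y * y^k)
      = fun y => ((((β:ℝ)+1)/x)^(β+1) / (Nat.factorial β))
          * (y^(β+k) * Real.exp (-((((β:ℝ)+1)/x) * y))) := by
    funext y; unfold stmt2_hh; rw [pow_add]; ring
  rw [e]
  exact (stmt2_L2 _ hc (β+k)).const_mul _

open Set in
lemma stmt2_hh_mom (β k : ℕ) {x : ℝ} (hx : 0 < x) :
    ∫ y in Ioi (0:ℝ), stmt2_hh β x y * y^k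
      = (Nat.factorial (β+k) : ℝ) / ((Nat.factorial β) * (((β:ℝ)+1)/x)^k) := by
  have hc : (0:ℝ) < ((β:ℝ)+1)/x := by positivity
  have e : (fun y => stmt2_hh β x y * y^k)
      = fun y => ((((β:ℝ)+1)/x)^(β+1) / (Nat.factorial β))
          * (y^(β+k) * Real.exp (-((((β:ℝ)+1)/x) * y))) := by
    funext y; unfold stmt2_hh; rw [pow_add]; ring
  rw [e, integral_const_mul, stmt2_L1 _ hc (β+k)]
  rw [show β+k+1 = (β+1)+k by ring, pow_add]
  have h1 : (((β:ℝ)+1)/x) ≠ 0 := ne_of_gt hc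
  have h2 : ((Nat.factorial β : ℝ)) ≠ 0 := Nat.cast_ne_zero.mpr (Nat.factorial_ne_zero β)
  have hx' : x ≠ 0 := ne_of_gt hx
  field_simp
  have e2 : x * (((β:ℝ)+1)/x) = (β:ℝ)+1 := mul_div_cancel₀ _ hx'
  rw [pow_add, pow_succ]
  linear_combination (-((((β:ℝ)+1)/x)^β * (((β:ℝ)+1)/x)^k)) * e2

lemma stmt2_hh_expand (β k : ℕ) (x : ℝ) :
    (fun y => stmt2_hh β x y * (y-x)^k)
      = fun y => ∑ j ∈ Finset.range (k+1),
          ((-x)^(k-j) * (k.choose j) : ℝ) * (stmt2_hh β x y * y^j) := by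
  funext y
  rw [show y - x = y + (-x) by ring, add_pow, Finset.mul_sum]
  exact Finset.sum_congr rfl fun j _ => by ring

open Set in
lemma stmt2_hh_cmom_int (β k : ℕ) {x : ℝ} (hx : 0 < x) :
    IntegrableOn (fun y => stmt2_hh β x y * (y-x)^k) (Ioi (0:ℝ)) := by
  rw [stmt2_hh_expand]
  exact integrable_finset_sum _ fun j _ => (stmt2_hh_int β j hx).const_mul _

open Set in
lemma stmt2_hh_cmom (β k : ℕ) {x : ℝ} (hx : 0 < x) :
    ∫ y in Ioi (0:ℝ), stmt2_hh β x y * (y-x)^k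
      = ∑ j ∈ Finset.range (k+1), ((-x)^(k-j) * (k.choose j) : ℝ)
          * ((Nat.factorial (β+j) : ℝ) / ((Nat.factorial β) * (((β:ℝ)+1)/x)^j)) := by
  rw [stmt2_hh_expand, integral_finset_sum _ fun j _ => (stmt2_hh_int β j hx).const_mul _]
  exact Finset.sum_congr rfl fun j _ => by rw [integral_const_mul, stmt2_hh_mom β j hx]

lemma stmt2_fact_cast1 (β : ℕ) :
    (Nat.factorial (β+1) : ℝ) = ((β:ℝ)+1) * (Nat.factorial β) := by
  rw [Nat.factorial_succ]; push_cast; ring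
lemma stmt2_fact_cast2 (β : ℕ) : (Nat.factorial (β+2) : ℝ)
    = ((β:ℝ)+2) * (((β:ℝ)+1) * (Nat.factorial β)) := by
  rw [show β+2 = (β+1)+1 from rfl, Nat.factorial_succ, Nat.cast_mul, stmt2_fact_cast1]
  push_cast; ring
lemma stmt2_fact_cast3 (β : ℕ) : (Nat.factorial (β+3) : ℝ)
    = ((β:ℝ)+3) * (((β:ℝ)+2) * (((β:ℝ)+1) * (Nat.factorial β))) := by
  rw [show β+3 = (β+2)+1 from rfl, Nat.factorial_succ, Nat.cast_mul, stmt2_fact_cast2]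
  push_cast; ring
lemma stmt2_fact_cast4 (β : ℕ) : (Nat.factorial (β+4) : ℝ)
    = ((β:ℝ)+4) * (((β:ℝ)+3) * (((β:ℝ)+2) * (((β:ℝ)+1) * (Nat.factorial β)))) := by
  rw [show β+4 = (β+3)+1 from rfl, Nat.factorial_succ, Nat.cast_mul, stmt2_fact_cast3]
  push_cast; ring

open Set in
lemma stmt2_hh_E0 (β : ℕ) {x : ℝ} (hx : 0 < x) :
    ∫ y in Ioi (0:ℝ), stmt2_hh β x y * (y-x)^0 = 1 := by
  have hfb : ((Nat.factorial β : ℝ)) ≠ 0 := Nat.cast_ne_zero.mpr (Nat.factorial_ne_zero β)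
  rw [stmt2_hh_cmom β 0 hx]
  simp [hfb]

open Set in
lemma stmt2_hh_E1 (β : ℕ) {x : ℝ} (hx : 0 < x) :
    ∫ y in Ioi (0:ℝ), stmt2_hh β x y * (y-x)^1 = 0 := by
  have hfb : ((Nat.factorial β : ℝ)) ≠ 0 := Nat.cast_ne_zero.mpr (Nat.factorial_ne_zero β)
  have hb : ((β:ℝ)+1) ≠ 0 := by positivity
  have hx' : x ≠ 0 := ne_of_gt hx
  rw [stmt2_hh_cmom β 1 hx]
  simp [Finset.sum_range_succ, stmt2_fact_cast1]
  field_simp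
  ring

open Set in
lemma stmt2_hh_E2 (β : ℕ) {x : ℝ} (hx : 0 < x) :
    ∫ y in Ioi (0:ℝ), stmt2_hh β x y * (y-x)^2 = x^2 / ((β:ℝ)+1) := by
  have hfb : ((Nat.factorial β : ℝ)) ≠ 0 := Nat.cast_ne_zero.mpr (Nat.factorial_ne_zero β)
  have hb : ((β:ℝ)+1) ≠ 0 := by positivity
  have hx' : x ≠ 0 := ne_of_gt hx
  rw [stmt2_hh_cmom β 2 hx]
  simp [Finset.sum_range_succ, stmt2_fact_cast1, stmt2_fact_cast2]
  field_simp
  ring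

open Set in
lemma stmt2_hh_E4 (β : ℕ) {x : ℝ} (hx : 0 < x) :
    ∫ y in Ioi (0:ℝ), stmt2_hh β x y * (y-x)^4
      = 3 * x^4 * ((β:ℝ)+3) / ((β:ℝ)+1)^3 := by
  have hfb : ((Nat.factorial β : ℝ)) ≠ 0 := Nat.cast_ne_zero.mpr (Nat.factorial_ne_zero β)
  have hb : ((β:ℝ)+1) ≠ 0 := by positivity
  have hx' : x ≠ 0 := ne_of_gt hx
  rw [stmt2_hh_cmom β 4 hx]
  simp [Finset.sum_range_succ, stmt2_fact_cast1, stmt2_fact_cast2, stmt2_fact_cast3,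
    stmt2_fact_cast4, show Nat.choose 4 2 = 6 from by decide]
  field_simp
  ring

open Set in
lemma stmt2_push {Ω : Type*} [MeasurableSpace Ω] (P : Measure Ω) [IsProbabilityMeasure P]
    (f : ℝ → ℝ) (hf_cont : ContinuousOn f (Ici 0))
    (hf_nonneg : ∀ y ∈ Set.Ici (0:ℝ), 0 ≤ f y)
    (W : ℝ) (hW_pos : 0 < W) (g : ℝ → ℝ) (hg : ∀ y, g y = y * f y / W)
    (Y0 : Ω → ℝ) (hY_meas : Measurable Y0)
    (hY_law : P.map Y0
      = (volume.restrict (Ioi 0)).withDensity (fun y => ENNReal.ofReal (g y)))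
    (x : ℝ) (hx : 0 < x) (β : ℕ) :
    ∫ ω, (W / (Y0 ω)^2 * (1 / Real.Gamma ((β:ℝ)+1))
        * ((((β:ℝ)+1) * Y0 ω / x)^(β+1)) * Real.exp (-(((β:ℝ)+1) * Y0 ω / x))) ∂P
      = ∫ y in Ioi (0:ℝ), stmt2_hh β x y * f y := by
  set φ : ℝ → ℝ := fun y => W / y^2 * (1 / Real.Gamma ((β:ℝ)+1))
        * ((((β:ℝ)+1) * y / x)^(β+1)) * Real.exp (-(((β:ℝ)+1) * y / x)) with hφ
  have hφm : Measurable φ := by fun_prop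
  have hfae : AEMeasurable f (volume.restrict (Ioi (0:ℝ))) :=
    (hf_cont.mono Ioi_subset_Ici_self).aemeasurable measurableSet_Ioi
  have hgae : AEMeasurable (fun y => (g y).toNNReal) (volume.restrict (Ioi (0:ℝ))) := by
    have : AEMeasurable g (volume.restrict (Ioi (0:ℝ))) := by
      have : AEMeasurable (fun y => y * f y / W) (volume.restrict (Ioi (0:ℝ))) :=
        (aemeasurable_id.mul hfae).div_const W
      exact this.congr (Filter.Eventually.of_forall fun y => (hg y).symm)
    exact measurable_real_toNNReal.comp_aemeasurable this
  calc ∫ ω, φ (Y0 ω) ∂P = ∫ y, φ y ∂(P.map Y0) :=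
        (integral_map hY_meas.aemeasurable hφm.aestronglyMeasurable).symm
    _ = ∫ y, (g y).toNNReal • φ y ∂(volume.restrict (Ioi 0)) := by
        rw [hY_law]
        exact integral_withDensity_eq_integral_smul₀ hgae φ
    _ = ∫ y in Ioi (0:ℝ), stmt2_hh β x y * f y := by
        refine setIntegral_congr_fun measurableSet_Ioi (fun y hy => ?_)
        have hy0 : 0 < y := hy
        have hfy : 0 ≤ f y := hf_nonneg y (le_of_lt hy0)
        have hgy : 0 ≤ g y := by rw [hg]; positivity
        rw [NNReal.smul_def, Real.coe_toNNReal _ hgy, hg, hφ]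
        have hΓ : Real.Gamma ((β:ℝ)+1) = (Nat.factorial β : ℝ) := Real.Gamma_nat_eq_factorial β
        rw [hΓ]
        unfold stmt2_hh
        have h1 : y ≠ 0 := ne_of_gt hy0
        have h2 : W ≠ 0 := ne_of_gt hW_pos
        have h3 : ((Nat.factorial β : ℝ)) ≠ 0 := Nat.cast_ne_zero.mpr (Nat.factorial_ne_zero β)
        have h4 : x ≠ 0 := ne_of_gt hx
        have e1 : ((β:ℝ)+1) * y / x = (((β:ℝ)+1)/x) * y := by ring
        simp only [smul_eq_mul]
        rw [e1, mul_pow]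
        field_simp
        ring

theorem stmt_2
    {Ω : Type*} [MeasurableSpace Ω] (P : Measure Ω) [IsProbabilityMeasure P]
    (f f' f'' : ℝ → ℝ)
    (hf_nonneg : ∀ y ∈ Set.Ici (0:ℝ), 0 ≤ f y)
    (hf_int : ∫ y in Set.Ioi (0:ℝ), f y = 1)
    (hf_deriv : ∀ t ∈ Set.Ici (0:ℝ), HasDerivWithinAt f (f' t) (Set.Ici 0) t)
    (hf_deriv2 : ∀ t ∈ Set.Ici (0:ℝ), HasDerivWithinAt f' (f'' t) (Set.Ici 0) t)
    (hf''_cont : ContinuousOn f'' (Set.Ici 0))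
    (hf''_bdd : ∃ C : ℝ, ∀ t ∈ Set.Ici (0:ℝ), |f'' t| ≤ C)
    (W : ℝ) (hW_pos : 0 < W)
    (hW_int : IntegrableOn (fun y => y * f y) (Set.Ioi 0) volume)
    (hW : W = ∫ y in Set.Ioi (0:ℝ), y * f y)
    (g : ℝ → ℝ) (hg : ∀ y, g y = y * f y / W)
    (Y : ℕ → Ω → ℝ)
    (hY_meas : ∀ i, Measurable (Y i))
    (hY_indep : iIndepFun Y P)
    (hY_law : ∀ i, P.map (Y i)
      = (volume.restrict (Set.Ioi 0)).withDensity (fun y => ENNReal.ofReal (g y)))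
    (x : ℝ) (hx : 0 < x) (hfx : 0 < f x)
    (M : ℕ → ℕ → Ω → ℝ)
    (hM : ∀ (α i : ℕ) (ω : Ω), M α i ω
      = W / (Y i ω) ^ 2 * (1 / Real.Gamma (α : ℝ)) * ((α : ℝ) * Y i ω / x) ^ α
        * Real.exp (-((α : ℝ) * Y i ω / x)))
    : Tendsto (fun α : ℕ => (α : ℝ) * ((∫ ω, M α 0 ω ∂P) - f x))
      atTop (𝓝 (x ^ 2 * f'' x / 2)) := by
  classical
  obtain ⟨C, hC⟩ := hf''_bdd
  have hC0 : 0 ≤ C := (abs_nonneg _).trans (hC 0 Set.self_mem_Ici)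
  set K : ℝ := C + |f'' x| with hKdef
  have hK0 : 0 ≤ K := by positivity
  have hf_cont : ContinuousOn f (Set.Ici (0:ℝ)) :=
    fun t ht => (hf_deriv t ht).continuousWithinAt
  have hfInt : IntegrableOn f (Set.Ioi (0:ℝ)) volume := by
    by_contra hcon
    rw [MeasureTheory.integral_undef hcon] at hf_int
    norm_num at hf_int
  set R : ℝ → ℝ := fun y => f y - f x - f' x * (y-x) - f'' x/2*(y-x)^2 with hRdef
  have hRglob : ∀ y ∈ Set.Ici (0:ℝ), |R y| ≤ K * (y-x)^2 := by
    intro y hy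
    exact stmt2_taylor1 hf_deriv hf_deriv2 hx.le hy (fun t ht => by
      calc |f'' t - f'' x| ≤ |f'' t| + |f'' x| := abs_sub _ _
        _ ≤ C + |f'' x| := by
            gcongr
            exact hC t (stmt2_uIcc_subset_Ici hx.le hy ht))
  have hmeas_hh : ∀ β : ℕ, Measurable (stmt2_hh β x) := fun β => by
    unfold stmt2_hh; fun_prop
  have hhh_nonneg : ∀ (β : ℕ) (y : ℝ), 0 ≤ y → 0 ≤ stmt2_hh β x y := fun β y hy => by
    unfold stmt2_hh; positivity
  have hhh_le : ∀ (β : ℕ) (y : ℝ), 0 ≤ y → stmt2_hh β x y ≤ ((β:ℝ)+1)/x := by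
    intro β y hy
    have hc : (0:ℝ) < ((β:ℝ)+1)/x := by positivity
    have h3 := stmt2_L3 _ hc β y hy
    unfold stmt2_hh
    calc (((β:ℝ)+1)/x)^(β+1) * y^β * Real.exp (-((((β:ℝ)+1)/x) * y)) / (Nat.factorial β)
        = ((((β:ℝ)+1)/x)^(β+1) / (Nat.factorial β))
            * (y^β * Real.exp (-((((β:ℝ)+1)/x) * y))) := by ring
      _ ≤ ((((β:ℝ)+1)/x)^(β+1) / (Nat.factorial β))
            * ((Nat.factorial β : ℝ) / (((β:ℝ)+1)/x)^β) :=
          mul_le_mul_of_nonneg_left h3 (by positivity)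
      _ = ((β:ℝ)+1)/x := by
          rw [pow_succ]
          have h2 : ((Nat.factorial β : ℝ)) ≠ 0 := Nat.cast_ne_zero.mpr (Nat.factorial_ne_zero β)
          field_simp
  have hInt_hf : ∀ β : ℕ, IntegrableOn (fun y => stmt2_hh β x y * f y) (Set.Ioi (0:ℝ)) := by
    intro β
    refine Integrable.mono' (hfInt.const_mul (((β:ℝ)+1)/x))
      (((hmeas_hh β).aestronglyMeasurable).mul hfInt.aestronglyMeasurable) ?_
    refine (ae_restrict_iff' measurableSet_Ioi).2 (Filter.Eventually.of_forall fun y hy => ?_)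
    have hy0 : (0:ℝ) ≤ y := le_of_lt hy
    rw [Real.norm_eq_abs, abs_mul, abs_of_nonneg (hhh_nonneg β y hy0),
      abs_of_nonneg (hf_nonneg y hy0)]
    exact mul_le_mul_of_nonneg_right (hhh_le β y hy0) (hf_nonneg y hy0)
  have hInt_hR : ∀ β : ℕ, IntegrableOn (fun y => stmt2_hh β x y * R y) (Set.Ioi (0:ℝ)) := by
    intro β
    have e : (fun y => stmt2_hh β x y * R y)
        = fun y => stmt2_hh β x y * f y - ((f x) * (stmt2_hh β x y * (y-x)^0)
            + ((f' x) * (stmt2_hh β x y * (y-x)^1) + (f'' x/2) * (stmt2_hh β x y * (y-x)^2))) := by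
      funext y; simp only [hRdef]; ring
    rw [e]
    exact (hInt_hf β).sub (((stmt2_hh_cmom_int β 0 hx).const_mul _).add
      (((stmt2_hh_cmom_int β 1 hx).const_mul _).add ((stmt2_hh_cmom_int β 2 hx).const_mul _)))
  have key : ∀ β : ℕ, (∫ ω, M (β+1) 0 ω ∂P)
      = f x + (f'' x/2) * (x^2/((β:ℝ)+1)) + ∫ y in Set.Ioi (0:ℝ), stmt2_hh β x y * R y := by
    intro β
    have hpush := stmt2_push P f hf_cont hf_nonneg W hW_pos g hg (Y 0) (hY_meas 0)
      (hY_law 0) x hx β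
    have hM' : ∫ ω, M (β+1) 0 ω ∂P = ∫ y in Set.Ioi (0:ℝ), stmt2_hh β x y * f y := by
      rw [← hpush]
      refine integral_congr_ae (Filter.Eventually.of_forall fun ω => ?_)
      rw [hM (β+1) 0 ω]
      push_cast
      ring_nf
    have e : (fun y => stmt2_hh β x y * f y)
        = fun y => ((f x) * (stmt2_hh β x y * (y-x)^0)
            + ((f' x) * (stmt2_hh β x y * (y-x)^1)
            + ((f'' x/2) * (stmt2_hh β x y * (y-x)^2) + stmt2_hh β x y * R y))) := by
      funext y; simp only [hRdef]; ring
    rw [hM', e]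
    rw [integral_add ((stmt2_hh_cmom_int β 0 hx).const_mul (f x))
        (show Integrable (fun y => f' x * (stmt2_hh β x y * (y-x)^1)
            + (f'' x/2 * (stmt2_hh β x y * (y-x)^2) + stmt2_hh β x y * R y))
            (volume.restrict (Set.Ioi 0)) from
          ((stmt2_hh_cmom_int β 1 hx).const_mul (f' x)).add
            (((stmt2_hh_cmom_int β 2 hx).const_mul (f'' x/2)).add (hInt_hR β)))]
    rw [integral_add ((stmt2_hh_cmom_int β 1 hx).const_mul (f' x))
        (show Integrable (fun y => f'' x/2 * (stmt2_hh β x y * (y-x)^2)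
            + stmt2_hh β x y * R y) (volume.restrict (Set.Ioi 0)) from
          ((stmt2_hh_cmom_int β 2 hx).const_mul (f'' x/2)).add (hInt_hR β))]
    rw [integral_add ((stmt2_hh_cmom_int β 2 hx).const_mul (f'' x/2)) (hInt_hR β),
      integral_const_mul, integral_const_mul, integral_const_mul,
      stmt2_hh_E0 β hx, stmt2_hh_E1 β hx, stmt2_hh_E2 β hx]
    ring
  rw [← Filter.tendsto_add_atTop_iff_nat 1]
  have hTeq : ∀ β : ℕ, (((β+1:ℕ)):ℝ) * ((∫ ω, M (β+1) 0 ω ∂P) - f x)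
      = x^2*f'' x/2 + (((β:ℝ)+1) * ∫ y in Set.Ioi (0:ℝ), stmt2_hh β x y * R y) := by
    intro β
    rw [key β]
    have hb : ((β:ℝ)+1) ≠ 0 := by positivity
    push_cast
    field_simp
    ring
  have hzero : Tendsto (fun β : ℕ => ((β:ℝ)+1) * ∫ y in Set.Ioi (0:ℝ), stmt2_hh β x y * R y)
      atTop (𝓝 0) := by
    rw [NormedAddCommGroup.tendsto_nhds_zero]
    intro ε' hε'
    set ε := ε' / (2*(x^2+1)) with hεdef
    have hεpos : 0 < ε := by positivity
    have hcx : ContinuousWithinAt f'' (Set.Ici (0:ℝ)) x := hf''_cont x hx.le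
    rw [Metric.continuousWithinAt_iff] at hcx
    obtain ⟨δ, hδpos, hδ⟩ := hcx ε hεpos
    set δ' := δ/2 with hδ'def
    have hδ'pos : 0 < δ' := by positivity
    have hloc : ∀ y ∈ Set.Ici (0:ℝ), |y - x| ≤ δ' → |R y| ≤ ε * (y-x)^2 := by
      intro y hy hyd
      refine stmt2_taylor1 hf_deriv hf_deriv2 hx.le hy (fun t ht => ?_)
      have h1 : t ∈ Set.Ici (0:ℝ) := stmt2_uIcc_subset_Ici hx.le hy ht
      have h2 : |t - x| ≤ |y - x| := stmt2_abs_sub_le_uIcc ht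
      have h3 : dist t x < δ := by
        rw [Real.dist_eq]
        calc |t - x| ≤ δ' := le_trans h2 hyd
          _ < δ := by rw [hδ'def]; linarith
      have h4 := hδ h1 h3
      rw [Real.dist_eq] at h4
      exact le_of_lt h4
    have hptw : ∀ (β : ℕ), ∀ y ∈ Set.Ioi (0:ℝ), ‖stmt2_hh β x y * R y‖
        ≤ ε * (stmt2_hh β x y * (y-x)^2) + (K/δ'^2) * (stmt2_hh β x y * (y-x)^4) := by
      intro β y hy
      have hy0 : (0:ℝ) ≤ y := le_of_lt hy
      have hRb : |R y| ≤ ε * (y-x)^2 + (K/δ'^2) * (y-x)^4 := by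
        rcases le_or_gt |y - x| δ' with h | h
        · exact (hloc y hy0 h).trans (le_add_of_nonneg_right (by positivity))
        · have hsq : δ'^2 ≤ (y-x)^2 := by
            rw [← sq_abs (y-x)]
            exact pow_le_pow_left₀ hδ'pos.le h.le 2
          refine (hRglob y hy0).trans ?_
          have h2 : K * (y-x)^2 ≤ (K/δ'^2) * (y-x)^4 := by
            rw [div_mul_eq_mul_div, le_div_iff₀ (by positivity)]
            nlinarith [mul_nonneg (mul_nonneg hK0 (sq_nonneg (y-x))) (sub_nonneg.2 hsq)]
          exact h2.trans (le_add_of_nonneg_left (by positivity))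
      calc ‖stmt2_hh β x y * R y‖ = stmt2_hh β x y * |R y| := by
            rw [Real.norm_eq_abs, abs_mul, abs_of_nonneg (hhh_nonneg β y hy0)]
        _ ≤ stmt2_hh β x y * (ε * (y-x)^2 + (K/δ'^2) * (y-x)^4) :=
            mul_le_mul_of_nonneg_left hRb (hhh_nonneg β y hy0)
        _ = ε * (stmt2_hh β x y * (y-x)^2) + (K/δ'^2) * (stmt2_hh β x y * (y-x)^4) := by ring
    have hbd : ∀ β : ℕ, ‖((β:ℝ)+1) * ∫ y in Set.Ioi (0:ℝ), stmt2_hh β x y * R y‖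
        ≤ ε * x^2 + (3*K*x^4/δ'^2) * (((β:ℝ)+3) / ((β:ℝ)+1)^2) := by
      intro β
      have hbpos : (0:ℝ) < (β:ℝ)+1 := by positivity
      have h1 : ‖∫ y in Set.Ioi (0:ℝ), stmt2_hh β x y * R y‖
          ≤ ε * (x^2/((β:ℝ)+1)) + (K/δ'^2) * (3*x^4*((β:ℝ)+3)/((β:ℝ)+1)^3) := by
        calc ‖∫ y in Set.Ioi (0:ℝ), stmt2_hh β x y * R y‖
            ≤ ∫ y in Set.Ioi (0:ℝ), ‖stmt2_hh β x y * R y‖ := norm_integral_le_integral_norm _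
          _ ≤ ∫ y in Set.Ioi (0:ℝ), (ε * (stmt2_hh β x y * (y-x)^2)
                + (K/δ'^2) * (stmt2_hh β x y * (y-x)^4)) := by
              refine integral_mono_ae (hInt_hR β).norm
                (((stmt2_hh_cmom_int β 2 hx).const_mul ε).add
                  ((stmt2_hh_cmom_int β 4 hx).const_mul (K/δ'^2))) ?_
              refine (ae_restrict_iff' measurableSet_Ioi).2
                (Filter.Eventually.of_forall fun y hy => hptw β y hy)
          _ = ε * (x^2/((β:ℝ)+1)) + (K/δ'^2) * (3*x^4*((β:ℝ)+3)/((β:ℝ)+1)^3) := by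
              rw [integral_add ((stmt2_hh_cmom_int β 2 hx).const_mul ε)
                  ((stmt2_hh_cmom_int β 4 hx).const_mul (K/δ'^2)),
                integral_const_mul, integral_const_mul, stmt2_hh_E2 β hx, stmt2_hh_E4 β hx]
      calc ‖((β:ℝ)+1) * ∫ y in Set.Ioi (0:ℝ), stmt2_hh β x y * R y‖
          = ((β:ℝ)+1) * ‖∫ y in Set.Ioi (0:ℝ), stmt2_hh β x y * R y‖ := by
            rw [norm_mul, Real.norm_eq_abs ((β:ℝ)+1), abs_of_pos hbpos]
        _ ≤ ((β:ℝ)+1) * (ε * (x^2/((β:ℝ)+1)) + (K/δ'^2) * (3*x^4*((β:ℝ)+3)/((β:ℝ)+1)^3)) :=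
            mul_le_mul_of_nonneg_left h1 hbpos.le
        _ = ε * x^2 + (3*K*x^4/δ'^2) * (((β:ℝ)+3) / ((β:ℝ)+1)^2) := by
            field_simp
    have hquot : Tendsto (fun β : ℕ => (((β:ℝ)+3) / ((β:ℝ)+1)^2)) atTop (𝓝 0) := by
      refine squeeze_zero' (Filter.Eventually.of_forall fun β => by positivity)
        ?_ (tendsto_const_div_atTop_nhds_zero_nat 3)
      filter_upwards [eventually_ge_atTop 1] with β hβ
      have hβ1 : (1:ℝ) ≤ (β:ℝ) := by exact_mod_cast hβ
      rw [div_le_div_iff₀ (by positivity) (by positivity)]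
      nlinarith
    have hlim : Tendsto (fun β : ℕ => ε * x^2
        + (3*K*x^4/δ'^2) * (((β:ℝ)+3) / ((β:ℝ)+1)^2)) atTop (𝓝 (ε * x^2)) := by
      have := tendsto_const_nhds (x := ε * x^2) (f := atTop (α := ℕ)) |>.add
        ((tendsto_const_nhds (x := 3*K*x^4/δ'^2) (f := atTop (α := ℕ))).mul hquot)
      simpa using this
    have hεx : ε * x^2 < ε' := by
      rw [hεdef, div_mul_eq_mul_div, div_lt_iff₀ (by positivity)]
      nlinarith
    filter_upwards [hlim.eventually_lt_const hεx] with β hβ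
    exact lt_of_le_of_lt (hbd β) hβ
  have final := Tendsto.congr (fun β => (hTeq β).symm)
    ((tendsto_const_nhds (x := x^2*f'' x/2) (f := atTop (α := ℕ))).add hzero)
  simpa [mul_comm] using final
end

section
/- As the integer α → ∞, the second moment of M₁ satisfies E M₁² = (W/(2√π)) · (√α / x²) · f(x) + o(√α); equivalently, α^{−1/2} · E M₁² → W f(x) / (2√π x²). -/
open MeasureTheory ProbabilityTheory Filter
open scoped Topology ENNReal NNReal Real

section AuxLemmas
lemma auxG (n : ℕ) {b : ℝ} (hb : 0 < b) :
    ∫ y in Set.Ioi (0:ℝ), y ^ n * Real.exp (-(b * y)) = (n.factorial : ℝ) / b ^ (n + 1) := by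
  have h := Real.integral_rpow_mul_exp_neg_mul_Ioi (a := (n:ℝ) + 1) (by positivity) hb
  have h2 : ∫ y in Set.Ioi (0:ℝ), y ^ n * Real.exp (-(b * y))
      = ∫ t in Set.Ioi (0:ℝ), t ^ ((n:ℝ) + 1 - 1) * Real.exp (-(b * t)) := by
    refine setIntegral_congr_fun measurableSet_Ioi fun t ht => ?_
    rw [add_sub_cancel_right, Real.rpow_natCast]
  rw [h2, h, Real.Gamma_nat_eq_factorial]
  rw [show ((n:ℝ) + 1) = ((n+1 : ℕ) : ℝ) by push_cast; ring, Real.rpow_natCast, one_div, inv_pow]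
  field_simp

lemma auxGint (n : ℕ) {b : ℝ} (hb : 0 < b) :
    IntegrableOn (fun y : ℝ => y ^ n * Real.exp (-(b * y))) (Set.Ioi 0) volume := by
  by_contra h
  have h0 := integral_undef h
  rw [auxG n hb] at h0
  have h1 : (0:ℝ) < (n.factorial : ℝ) / b ^ (n+1) := by positivity
  rw [h0] at h1
  exact lt_irrefl _ h1

lemma auxWB (n : ℕ) {b y : ℝ} (hb : 0 < b) (hy : 0 ≤ y) :
    y ^ n * Real.exp (-(b * y)) ≤ (n.factorial : ℝ) / b ^ n := by
  have h := Real.pow_div_factorial_le_exp (b*y) (by positivity) n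
  have hfac : (0:ℝ) < n.factorial := by positivity
  rw [div_le_iff₀ hfac, mul_pow] at h
  have hbn : (0:ℝ) < b ^ n := by positivity
  have hexp := Real.exp_pos (b*y)
  rw [Real.exp_neg]
  rw [mul_inv_le_iff₀ hexp, div_mul_eq_mul_div, le_div_iff₀ hbn]
  nlinarith

lemma auxPF (n : ℕ) : (n:ℝ)^n ≤ (n.factorial : ℝ) * Real.exp 1 ^ n := by
  have h := Real.pow_div_factorial_le_exp (n:ℝ) (by positivity) n
  have hfac : (0:ℝ) < n.factorial := by positivity
  rw [div_le_iff₀ hfac, Real.exp_one_pow] at *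
  nlinarith

lemma auxDeriv (t : ℝ) : HasDerivAt (fun s : ℝ => s * Real.exp (-s)) ((1 - t) * Real.exp (-t)) t := by
  have h : HasDerivAt (fun s : ℝ => Real.exp (-s)) (-Real.exp (-t)) t := by
    simpa [Function.comp_def] using (Real.hasDerivAt_exp (-t)).comp t (hasDerivAt_neg t)
  have := (hasDerivAt_id t).mul h
  exact this.congr_deriv (by simp; ring)

lemma auxMono : MonotoneOn (fun s : ℝ => s * Real.exp (-s)) (Set.Icc 0 1) := by
  apply monotoneOn_of_deriv_nonneg (convex_Icc 0 1)
  · exact (continuous_id.mul (Real.continuous_exp.comp continuous_neg)).continuousOn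
  · intro t _
    exact (auxDeriv t).differentiableAt.differentiableWithinAt
  · intro t ht
    rw [interior_Icc] at ht
    rw [(auxDeriv t).deriv]
    have := Real.exp_pos (-t)
    nlinarith [ht.2]

lemma auxAnti : AntitoneOn (fun s : ℝ => s * Real.exp (-s)) (Set.Ici 1) := by
  apply antitoneOn_of_deriv_nonpos (convex_Ici 1)
  · exact (continuous_id.mul (Real.continuous_exp.comp continuous_neg)).continuousOn
  · intro t _
    exact (auxDeriv t).differentiableAt.differentiableWithinAt
  · intro t ht
    rw [interior_Ici] at ht
    rw [(auxDeriv t).deriv]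
    have := Real.exp_pos (-t)
    nlinarith [le_of_lt (show (1:ℝ) < t from ht)]

lemma auxFar {d t : ℝ} (hd0 : 0 < d) (hd1 : d < 1) (ht : 0 < t) (hfar : d ≤ |t - 1|) :
    t * Real.exp (-t) ≤ max ((1-d) * Real.exp (-(1-d))) ((1+d) * Real.exp (-(1+d))) := by
  rcases le_abs.mp hfar with h | h
  · -- t - 1 ≥ d, i.e. t ≥ 1 + d
    have ht1 : 1 + d ≤ t := by linarith
    refine le_trans (auxAnti (by simp; linarith : (1+d) ∈ Set.Ici (1:ℝ)) (by simp; linarith) ht1) (le_max_right _ _)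
  · -- -(t-1) ≥ d, t ≤ 1 - d
    have ht1 : t ≤ 1 - d := by linarith
    refine le_trans (auxMono (Set.mem_Icc.2 ⟨by linarith, by linarith⟩) (Set.mem_Icc.2 ⟨by linarith, by linarith⟩) ht1) (le_max_left _ _)

lemma auxQpos {d : ℝ} (hd0 : 0 < d) (hd1 : d < 1) :
    0 < max ((1-d) * Real.exp (-(1-d))) ((1+d) * Real.exp (-(1+d))) :=
  lt_max_of_lt_left (mul_pos (by linarith) (Real.exp_pos _))

lemma auxQlt {d : ℝ} (hd0 : 0 < d) (hd1 : d < 1) :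
    max ((1-d) * Real.exp (-(1-d))) ((1+d) * Real.exp (-(1+d))) * Real.exp 1 < 1 := by
  have h1 : (1-d) * Real.exp (-(1-d)) * Real.exp 1 < 1 := by
    have hlt := Real.add_one_lt_exp (show -d ≠ 0 by simpa using hd0.ne')
    rw [mul_assoc, ← Real.exp_add, show (-(1-d)+1) = d by ring]
    have hmul : Real.exp (-d) * Real.exp d = 1 := by rw [← Real.exp_add]; simp
    nlinarith [Real.exp_pos (-d), Real.exp_pos d]
  have h2 : (1+d) * Real.exp (-(1+d)) * Real.exp 1 < 1 := by
    have hlt := Real.add_one_lt_exp (show d ≠ 0 by simpa using hd0.ne')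
    rw [mul_assoc, ← Real.exp_add, show (-(1+d)+1) = -d by ring]
    have hmul : Real.exp (-d) * Real.exp d = 1 := by rw [← Real.exp_add]; simp
    nlinarith [Real.exp_pos (-d), Real.exp_pos d]
  rw [max_mul_of_nonneg _ _ (Real.exp_pos 1).le]
  exact max_lt h1 h2

lemma auxFarPow {d t : ℝ} (hd0 : 0 < d) (hd1 : d < 1) (ht : 0 < t) (hfar : d ≤ |t - 1|) (k : ℕ) :
    t ^ (k+1) * Real.exp (-(((k:ℝ)+4) * t)) ≤
      (max ((1-d) * Real.exp (-(1-d))) ((1+d) * Real.exp (-(1+d))))^k * (t * Real.exp (-(4*t))) := by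
  have hsplit : t ^ (k+1) * Real.exp (-(((k:ℝ)+4) * t))
      = (t * Real.exp (-t))^k * (t * Real.exp (-(4*t))) := by
    rw [mul_pow, pow_succ]
    rw [show Real.exp (-t) ^ k = Real.exp ((k:ℝ) * (-t)) by rw [Real.exp_nat_mul]]
    rw [show (-(((k:ℝ)+4) * t)) = ((k:ℝ) * (-t)) + (-(4*t)) by ring, Real.exp_add]
    ring
  rw [hsplit]
  apply mul_le_mul_of_nonneg_right _ (by positivity)
  exact pow_le_pow_left₀ (by positivity) (auxFar hd0 hd1 ht hfar) k

lemma auxTail {ρ : ℝ} (h0 : 0 ≤ ρ) (h1 : ρ < 1) (C : ℝ) :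
    Tendsto (fun k : ℕ => C * (((k:ℝ)+4) * ρ^k)) atTop (𝓝 0) := by
  have ha := (tendsto_pow_const_mul_const_pow_of_lt_one 1 h0 h1).const_mul C
  have hb := (tendsto_pow_const_mul_const_pow_of_lt_one 0 h0 h1).const_mul (C*4)
  have := ha.add hb
  rw [mul_zero, mul_zero, add_zero] at this
  refine this.congr fun k => ?_
  simp only [pow_one, pow_zero, one_mul]
  ring

lemma aux13 (m : ℕ) (hm : 1 ≤ m) : ((m:ℝ)+3)^m ≤ (m:ℝ)^m * Real.exp 3 := by
  have hm0 : (0:ℝ) < m := by exact_mod_cast hm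
  have h1 : ((m:ℝ)+3) = (m:ℝ) * (1 + 3/m) := by field_simp
  have h2 : (1 + 3/(m:ℝ)) ≤ Real.exp (3/m) := by
    have := Real.add_one_le_exp (3/(m:ℝ)); linarith
  have h3 : (1 + 3/(m:ℝ))^m ≤ Real.exp (3/m) ^ m := pow_le_pow_left₀ (by positivity) h2 m
  have h4 : Real.exp (3/(m:ℝ)) ^ m = Real.exp 3 := by
    rw [← Real.exp_nat_mul]
    congr 1
    field_simp
  rw [h1, mul_pow]
  rw [h4] at h3
  exact mul_le_mul_of_nonneg_left h3 (by positivity)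

lemma auxCB : Tendsto (fun n : ℕ => ((2*n).factorial : ℝ) * Real.sqrt n / ((n.factorial : ℝ)^2 * 4^n))
    atTop (𝓝 (1 / Real.sqrt π)) := by
  have h2n : Tendsto (fun n : ℕ => 2*n) atTop atTop := by
    apply tendsto_atTop_atTop.2
    exact fun b => ⟨b, fun a ha => by omega⟩
  have hs2 : Tendsto (fun n : ℕ => Stirling.stirlingSeq (2*n)) atTop (𝓝 (Real.sqrt π)) :=
    Stirling.tendsto_stirlingSeq_sqrt_pi.comp h2n
  have hs : Tendsto (fun n : ℕ => Stirling.stirlingSeq n) atTop (𝓝 (Real.sqrt π)) :=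
    Stirling.tendsto_stirlingSeq_sqrt_pi
  have hpi : Real.sqrt π ≠ 0 := by positivity
  have hlim : Tendsto (fun n : ℕ => Stirling.stirlingSeq (2*n) / (Stirling.stirlingSeq n)^2)
      atTop (𝓝 (Real.sqrt π / (Real.sqrt π)^2)) := hs2.div (hs.pow 2) (by positivity)
  have hval : Real.sqrt π / (Real.sqrt π)^2 = 1 / Real.sqrt π := by
    rw [sq]; field_simp
  rw [hval] at hlim
  refine hlim.congr' ?_
  filter_upwards [eventually_ge_atTop 1] with n hn
  have hn0 : (0:ℝ) < n := by exact_mod_cast hn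
  unfold Stirling.stirlingSeq
  have hsq : Real.sqrt (2*(2*n) : ℝ) = 2 * Real.sqrt n := by
    rw [show (2:ℝ)*(2*(n:ℕ)) = (2*Real.sqrt (n:ℝ))^2 by
      rw [mul_pow, Real.sq_sqrt hn0.le]; push_cast; ring]
    exact Real.sqrt_sq (by positivity)
  have hpow : (2*(n:ℝ)) / Real.exp 1 = 2 * ((n:ℝ)/Real.exp 1) := by
    field_simp
  push_cast
  rw [hsq, hpow, mul_pow, pow_mul]
  have h1 : Real.sqrt (2*(n:ℝ)) ≠ 0 := by positivity
  have h2 : ((n:ℝ)/Real.exp 1) ≠ 0 := by positivity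
  have h3 : Real.sqrt (n:ℝ) ≠ 0 := by positivity
  have h4 : (n.factorial : ℝ) ≠ 0 := by positivity
  have h5 : ((n:ℝ)/Real.exp 1)^n ≠ 0 := pow_ne_zero _ h2
  have hss : Real.sqrt (2*(n:ℝ)) = Real.sqrt 2 * Real.sqrt n := Real.sqrt_mul (by norm_num) _
  have hs2n : Real.sqrt 2 ≠ 0 := by positivity
  have hnss : Real.sqrt n * Real.sqrt n = (n:ℝ) := Real.mul_self_sqrt (by positivity)
  rw [hss]
  have he2 : Real.exp ((n:ℝ)*2) = Real.exp (n:ℝ) * Real.exp (n:ℝ) := by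
    rw [mul_comm, two_mul, Real.exp_add]
  have hs22 : Real.sqrt 2 * Real.sqrt 2 = 2 := Real.mul_self_sqrt (by norm_num)
  field_simp
  rw [sq (Real.sqrt 2), hs22]
  ring

lemma auxPF' (n : ℕ) : (n:ℝ)^n ≤ (n.factorial : ℝ) * Real.exp 1 ^ n := by
  have h := Real.pow_div_factorial_le_exp (n:ℝ) (by positivity) n
  have hfac : (0:ℝ) < n.factorial := by positivity
  rw [div_le_iff₀ hfac, Real.exp_one_pow] at *
  nlinarith

lemma aux13' (m : ℕ) (hm : 1 ≤ m) : ((m:ℝ)+3)^m ≤ (m:ℝ)^m * Real.exp 3 := by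
  have hm0 : (0:ℝ) < m := by exact_mod_cast hm
  have h1 : ((m:ℝ)+3) = (m:ℝ) * (1 + 3/m) := by field_simp
  have h2 : (1 + 3/(m:ℝ)) ≤ Real.exp (3/m) := by
    have := Real.add_one_le_exp (3/(m:ℝ)); linarith
  have h3 : (1 + 3/(m:ℝ))^m ≤ Real.exp (3/m) ^ m := pow_le_pow_left₀ (by positivity) h2 m
  have h4 : Real.exp (3/(m:ℝ)) ^ m = Real.exp 3 := by
    rw [← Real.exp_nat_mul]; congr 1; field_simp
  rw [h1, mul_pow]
  rw [h4] at h3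
  exact mul_le_mul_of_nonneg_left h3 (by positivity)

lemma auxTailBound {x q D : ℝ} (hx : 0 < x) (hq : 0 < q) (hD : 0 ≤ D) (m : ℕ) (hm : 1 ≤ m) :
    x^m * q^(m-1) * D / ((m.factorial : ℝ) / (((m:ℝ)+3)/x)^(m+1))
      ≤ (D/x) * (Real.exp 3 * Real.exp 1) * ((((m-1:ℕ):ℝ)+4) * (q*Real.exp 1)^(m-1)) := by
  have hm0 : (0:ℝ) < m := by exact_mod_cast hm
  have hfm : (0:ℝ) < m.factorial := by positivity
  have hmm : (0:ℝ) < (m:ℝ)^m := by positivity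
  have hcast : ((m-1:ℕ):ℝ) = (m:ℝ) - 1 := by
    push_cast [Nat.cast_sub hm]; ring
  have h1 : x^m * q^(m-1) * D / ((m.factorial : ℝ) / (((m:ℝ)+3)/x)^(m+1))
      = (D/x) * (q^(m-1) * ((m:ℝ)+3)^(m+1) / m.factorial) := by
    rw [div_div_eq_mul_div, div_pow]
    rw [show m+1 = m+1 from rfl]
    field_simp
    ring
  rw [h1, hcast]
  have ha : ((m:ℝ)+3)^(m+1) ≤ ((m:ℝ)+3) * ((m:ℝ)^m * Real.exp 3) := by
    rw [pow_succ]
    calc ((m:ℝ)+3)^m * ((m:ℝ)+3) ≤ ((m:ℝ)^m * Real.exp 3) * ((m:ℝ)+3) :=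
          mul_le_mul_of_nonneg_right (aux13' m hm) (by positivity)
      _ = ((m:ℝ)+3) * ((m:ℝ)^m * Real.exp 3) := by ring
  have hb : 1/(m.factorial:ℝ) ≤ Real.exp 1^m / (m:ℝ)^m := by
    rw [div_le_div_iff₀ hfm hmm, one_mul]
    have := auxPF' m
    nlinarith [Real.exp_pos 1, pow_pos (Real.exp_pos 1) m]
  have hchain : q^(m-1) * ((m:ℝ)+3)^(m+1) / m.factorial
      ≤ q^(m-1) * (((m:ℝ)+3) * ((m:ℝ)^m * Real.exp 3)) * (Real.exp 1^m / (m:ℝ)^m) := by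
    calc q^(m-1) * ((m:ℝ)+3)^(m+1) / m.factorial
        = (q^(m-1) * ((m:ℝ)+3)^(m+1)) * (1/m.factorial) := by ring
      _ ≤ (q^(m-1) * (((m:ℝ)+3) * ((m:ℝ)^m * Real.exp 3))) * (Real.exp 1^m / (m:ℝ)^m) := by
          apply mul_le_mul
          · exact mul_le_mul_of_nonneg_left ha (by positivity)
          · exact hb
          · positivity
          · positivity
  have hDx : (0:ℝ) ≤ D/x := by positivity
  calc (D/x) * (q^(m-1) * ((m:ℝ)+3)^(m+1) / m.factorial)
      ≤ (D/x) * (q^(m-1) * (((m:ℝ)+3) * ((m:ℝ)^m * Real.exp 3)) * (Real.exp 1^m / (m:ℝ)^m)) :=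
        mul_le_mul_of_nonneg_left hchain hDx
    _ = (D/x) * (Real.exp 3 * Real.exp 1) * ((((m:ℝ)-1)+4) * (q*Real.exp 1)^(m-1)) := by
        have hem : Real.exp 1^m = Real.exp 1^(m-1) * Real.exp 1 := by
          rw [← pow_succ]
          congr 1
          omega
        have hm3 : ((m:ℝ)+3) = (((m:ℝ)-1)+4) := by ring
        rw [hem, mul_pow, hm3]
        field_simp

lemma auxKeyB (W x F1 F2 c : ℝ) (β : ℕ) (hx : x ≠ 0) (hF1 : F1 ≠ 0) (hc1 : 2*c-1 ≠ 0)
    (hc2 : 2*c-2 ≠ 0) (hc : c ≠ 0) :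
    W * (c/x)^(2*β+4) / F1^2 * (F2 / (2*c/x)^(2*β+2))
      = c * ((W/x^2) * ((2*c*(2*c-1)*(2*c-2)*F2) / ((c*F1)^2 * 2^(2*β+4)))
          * (2*c^2/((2*c-1)*(2*c-2)))) := by
  have hcx : c/x ≠ 0 := div_ne_zero hc hx
  have hcp : (c/x)^(2*β+2) ≠ 0 := pow_ne_zero _ hcx
  have h2 : (2:ℝ)^(2*β+2) ≠ 0 := by positivity
  have h3 : (2*c-1)*(2*c-2) ≠ 0 := mul_ne_zero hc1 hc2
  have h4 : c*2-1 ≠ 0 := by contrapose! hc1; linarith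
  have h5 : c-1 ≠ 0 := by contrapose! hc2; linarith
  rw [show (2*c/x) = 2*(c/x) by ring, mul_pow]
  rw [show 2*β+4 = (2*β+2)+2 from by omega, pow_add, pow_add]
  field_simp
  ring

end AuxLemmas

set_option maxHeartbeats 1000000 in
theorem stmt_3
    {Ω : Type*} [MeasurableSpace Ω] (P : Measure Ω) [IsProbabilityMeasure P]
    (f f' f'' : ℝ → ℝ)
    (hf_nonneg : ∀ y ∈ Set.Ici (0:ℝ), 0 ≤ f y)
    (hf_int : ∫ y in Set.Ioi (0:ℝ), f y = 1)
    (hf_deriv : ∀ t ∈ Set.Ici (0:ℝ), HasDerivWithinAt f (f' t) (Set.Ici 0) t)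
    (hf_deriv2 : ∀ t ∈ Set.Ici (0:ℝ), HasDerivWithinAt f' (f'' t) (Set.Ici 0) t)
    (hf''_cont : ContinuousOn f'' (Set.Ici 0))
    (hf''_bdd : ∃ C : ℝ, ∀ t ∈ Set.Ici (0:ℝ), |f'' t| ≤ C)
    (W : ℝ) (hW_pos : 0 < W)
    (hW_int : IntegrableOn (fun y => y * f y) (Set.Ioi 0) volume)
    (hW : W = ∫ y in Set.Ioi (0:ℝ), y * f y)
    (g : ℝ → ℝ) (hg : ∀ y, g y = y * f y / W)
    (Y : ℕ → Ω → ℝ)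
    (hY_meas : ∀ i, Measurable (Y i))
    (hY_indep : iIndepFun Y P)
    (hY_law : ∀ i, P.map (Y i)
      = (volume.restrict (Set.Ioi 0)).withDensity (fun y => ENNReal.ofReal (g y)))
    (x : ℝ) (hx : 0 < x) (hfx : 0 < f x)
    (M : ℕ → ℕ → Ω → ℝ)
    (hM : ∀ (α i : ℕ) (ω : Ω), M α i ω
      = W / (Y i ω) ^ 2 * (1 / Real.Gamma (α : ℝ)) * ((α : ℝ) * Y i ω / x) ^ α
        * Real.exp (-((α : ℝ) * Y i ω / x)))
    : Tendsto (fun α : ℕ => (∫ ω, (M α 0 ω) ^ 2 ∂P) / Real.sqrt (α : ℝ))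
      atTop (𝓝 (W * f x / (2 * Real.sqrt π * x ^ 2))) := by
  -- basic continuity / measurability facts about f
  have hfc : ContinuousOn f (Set.Ici 0) := fun t ht =>
    ((hf_deriv t ht).differentiableWithinAt).continuousWithinAt
  have hfae : AEMeasurable f (volume.restrict (Set.Ioi (0:ℝ))) := by
    have h1 : AEMeasurable f (volume.restrict (Set.Ici (0:ℝ))) :=
      hfc.aemeasurable measurableSet_Ici
    exact h1.mono_measure (Measure.restrict_mono Set.Ioi_subset_Ici_self le_rfl)
  have hfint : IntegrableOn f (Set.Ioi (0:ℝ)) volume := by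
    by_contra h
    have := integral_undef h
    rw [hf_int] at this
    norm_num at this
  -- main objects
  set w : ℕ → ℝ → ℝ := fun α y => y^(2*α-3) * Real.exp (-(2*(α:ℝ)/x * y)) with hw_def
  set I : ℕ → ℝ := fun α => ∫ y in Set.Ioi (0:ℝ), w α y * f y with hI_def
  set G : ℕ → ℝ := fun α => ∫ y in Set.Ioi (0:ℝ), w α y with hG_def
  set Kf : ℕ → ℝ := fun α => W * ((α:ℝ)/x)^(2*α) / Real.Gamma (α:ℝ)^2 with hKf_def
  have hb_pos : ∀ α : ℕ, 1 ≤ α → 0 < 2*(α:ℝ)/x := by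
    intro α hα
    have : (1:ℝ) ≤ (α:ℝ) := by exact_mod_cast hα
    positivity
  have hw_cont : ∀ α : ℕ, Continuous (w α) := by
    intro α
    exact (continuous_pow _).mul
      (Real.continuous_exp.comp (continuous_const.mul continuous_id).neg)
  have hw_nonneg : ∀ (α : ℕ) (y : ℝ), 0 ≤ y → 0 ≤ w α y := by
    intro α y hy
    exact mul_nonneg (pow_nonneg hy _) (Real.exp_pos _).le
  have hGval : ∀ α : ℕ, 2 ≤ α → G α = ((2*α-3).factorial : ℝ) / (2*(α:ℝ)/x)^(2*α-2) := by
    intro α hα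
    rw [hG_def]
    simp only [hw_def]
    rw [auxG (2*α-3) (hb_pos α (by omega)), show 2*α-3+1 = 2*α-2 from by omega]
  have hGpos : ∀ α : ℕ, 2 ≤ α → 0 < G α := by
    intro α hα
    rw [hGval α hα]
    have := hb_pos α (by omega)
    positivity
  have hwint : ∀ α : ℕ, 1 ≤ α → IntegrableOn (w α) (Set.Ioi 0) volume := by
    intro α hα
    exact auxGint (2*α-3) (hb_pos α hα)
  have hwbdd : ∀ (α : ℕ), 1 ≤ α → ∀ y ∈ Set.Ioi (0:ℝ),
      w α y ≤ ((2*α-3).factorial : ℝ) / (2*(α:ℝ)/x)^(2*α-3) := by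
    intro α hα y hy
    exact auxWB (2*α-3) (hb_pos α hα) (le_of_lt hy)
  have hIint : ∀ α : ℕ, 1 ≤ α → IntegrableOn (fun y => w α y * f y) (Set.Ioi 0) volume := by
    intro α hα
    apply Integrable.mono'
      (g := fun y => (((2*α-3).factorial : ℝ) / (2*(α:ℝ)/x)^(2*α-3)) * f y)
      (hfint.const_mul _)
    · exact ((hw_cont α).aestronglyMeasurable).mul hfae.aestronglyMeasurable
    · rw [ae_restrict_iff' measurableSet_Ioi]
      refine ae_of_all _ fun y hy => ?_
      have hy0 : (0:ℝ) < y := hy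
      have hfy := hf_nonneg y (le_of_lt hy0)
      rw [Real.norm_eq_abs, abs_mul, abs_of_nonneg (hw_nonneg α y hy0.le), abs_of_nonneg hfy]
      exact mul_le_mul_of_nonneg_right (hwbdd α hα y hy) hfy
  -- transfer of the expectation
  have hE : ∀ α : ℕ, 2 ≤ α → ∫ ω, (M α 0 ω)^2 ∂P = Kf α * I α := by
    intro α hα
    have hα0 : (0:ℝ) < (α:ℝ) := by
      have : (2:ℝ) ≤ (α:ℝ) := by exact_mod_cast hα
      linarith
    have hΓ : Real.Gamma (α:ℝ) ≠ 0 := (Real.Gamma_pos_of_pos hα0).ne'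
    set φ : ℝ → ℝ := fun y => (W / y^2 * (1/Real.Gamma (α:ℝ)) * ((α:ℝ)*y/x)^α
        * Real.exp (-((α:ℝ)*y/x)))^2 with hφ_def
    have hφm : Measurable φ := by
      apply Measurable.pow_const
      apply Measurable.mul
      apply Measurable.mul
      apply Measurable.mul
      · exact measurable_const.div (measurable_id.pow_const 2)
      · exact measurable_const
      · exact ((measurable_const.mul measurable_id).div_const x).pow_const α
      · exact Real.measurable_exp.comp ((measurable_const.mul measurable_id).div_const x).neg
    have hgae : AEMeasurable (fun y => (g y).toNNReal) (volume.restrict (Set.Ioi (0:ℝ))) := by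
      apply AEMeasurable.real_toNNReal
      rw [show g = fun y => y * f y / W from funext hg]
      exact (aemeasurable_id'.mul hfae).div_const W
    calc ∫ ω, (M α 0 ω)^2 ∂P = ∫ ω, φ (Y 0 ω) ∂P := by
          simp only [hM, hφ_def]
      _ = ∫ y, φ y ∂(P.map (Y 0)) :=
          (integral_map (hY_meas 0).aemeasurable hφm.aestronglyMeasurable).symm
      _ = ∫ y, φ y ∂((volume.restrict (Set.Ioi 0)).withDensity fun y => ENNReal.ofReal (g y)) :=
          by rw [hY_law 0]
      _ = ∫ y in Set.Ioi (0:ℝ), ((g y).toNNReal : ℝ≥0) • φ y := by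
          rw [show (fun y => ENNReal.ofReal (g y)) = (fun y => (((g y).toNNReal : ℝ≥0) : ℝ≥0∞))
            from rfl]
          exact integral_withDensity_eq_integral_smul₀ hgae φ
      _ = ∫ y in Set.Ioi (0:ℝ), g y * φ y := by
          refine setIntegral_congr_fun measurableSet_Ioi fun y hy => ?_
          have hy0 : (0:ℝ) < y := hy
          have : 0 ≤ g y := by
            rw [hg]
            have := hf_nonneg y hy0.le
            positivity
          rw [NNReal.smul_def, Real.coe_toNNReal _ this, smul_eq_mul]
      _ = ∫ y in Set.Ioi (0:ℝ), Kf α * (w α y * f y) := by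
          refine setIntegral_congr_fun measurableSet_Ioi fun y hy => ?_
          have hy0 : (0:ℝ) < y := hy
          rw [hg, hφ_def, hKf_def]
          simp only [hw_def]
          have hexp : Real.exp (-(2*(α:ℝ)/x * y))
              = Real.exp (-((α:ℝ)*y/x)) * Real.exp (-((α:ℝ)*y/x)) := by
            rw [← Real.exp_add]; congr 1; ring
          have e1 : ((α:ℝ)*y/x)^α = ((α:ℝ)/x)^α * y^α := by
            rw [show (α:ℝ)*y/x = ((α:ℝ)/x)*y by ring, mul_pow]
          have e2 : ((α:ℝ)/x)^(2*α) = (((α:ℝ)/x)^α)^2 := by rw [← pow_mul, mul_comm]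
          have e4 : y^(2*α-3) = y^α*y^α/y^3 := by
            rw [eq_div_iff (by positivity), ← pow_add, ← pow_add]
            congr 1
            omega
          rw [hexp, e1, e2, e4]
          field_simp
      _ = Kf α * I α := by rw [hI_def]; exact integral_const_mul _ _
  -- Claim B : deterministic Stirling part
  have hB2 : Tendsto (fun α : ℕ => 2*(α:ℝ)^2 / ((2*(α:ℝ)-1)*(2*(α:ℝ)-2))) atTop (𝓝 (1/2)) := by
    have h1 : Tendsto (fun α : ℕ => 2 - 1/(α:ℝ)) atTop (𝓝 2) := by
      have hconst : Tendsto (fun _ : ℕ => (2:ℝ)) atTop (𝓝 2) := tendsto_const_nhds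
      have := hconst.sub tendsto_one_div_atTop_nhds_zero_nat
      simpa using this
    have h2 : Tendsto (fun α : ℕ => 2 - 2/(α:ℝ)) atTop (𝓝 2) := by
      have h0 : Tendsto (fun α : ℕ => 2 * (1/(α:ℝ))) atTop (𝓝 (2*0)) :=
        tendsto_one_div_atTop_nhds_zero_nat.const_mul 2
      have hconst : Tendsto (fun _ : ℕ => (2:ℝ)) atTop (𝓝 2) := tendsto_const_nhds
      have := hconst.sub h0
      simp only [mul_zero, sub_zero] at this
      refine this.congr fun α => ?_
      ring
    have hq : Tendsto (fun α : ℕ => 2 / ((2 - 1/(α:ℝ))*(2 - 2/(α:ℝ)))) atTop (𝓝 (2/(2*2))) :=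
      tendsto_const_nhds.div (h1.mul h2) (by norm_num)
    rw [show (2:ℝ)/(2*2) = 1/2 by norm_num] at hq
    refine hq.congr' ?_
    filter_upwards [eventually_ge_atTop 2] with α hα
    have hα0 : (2:ℝ) ≤ (α:ℝ) := by exact_mod_cast hα
    have h3 : (α:ℝ) ≠ 0 := by linarith
    have h4 : 2*(α:ℝ)-1 ≠ 0 := by intro h; nlinarith
    have h5 : 2*(α:ℝ)-2 ≠ 0 := by intro h; nlinarith
    field_simp
  have hBeq : ∀ α : ℕ, 2 ≤ α → Kf α * G α / Real.sqrt (α:ℝ)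
      = (W/x^2) * (((2*α).factorial : ℝ) * Real.sqrt (α:ℝ) / ((α.factorial:ℝ)^2 * 4^α))
        * (2*(α:ℝ)^2 / ((2*(α:ℝ)-1)*(2*(α:ℝ)-2))) := by
    intro α hα
    obtain ⟨β, rfl⟩ : ∃ β, α = β + 2 := ⟨α - 2, by omega⟩
    have hfact2 : (((2*(β+2)).factorial : ℕ) : ℝ)
        = (2*((β:ℝ)+2))*(2*((β:ℝ)+2)-1)*(2*((β:ℝ)+2)-2)*((2*β+1).factorial : ℝ) := by
      rw [show 2*(β+2) = ((2*β+1)+1+1)+1 from by omega]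
      push_cast [Nat.factorial_succ]
      ring
    have hfactN : (((β+2).factorial : ℕ) : ℝ) = ((β:ℝ)+2)*((β+1).factorial : ℝ) := by
      rw [show β+2 = (β+1)+1 from by omega]
      push_cast [Nat.factorial_succ]
      ring
    have hβ2 : ((β+2:ℕ):ℝ) = (β:ℝ)+2 := by push_cast; ring
    have hΓval : Real.Gamma ((β+2:ℕ):ℝ) = ((β+1).factorial : ℝ) := by
      rw [show ((β+2:ℕ):ℝ) = ((β+1:ℕ):ℝ) + 1 by push_cast; ring, Real.Gamma_nat_eq_factorial]
    set s : ℝ := Real.sqrt ((β+2:ℕ):ℝ) with hs_def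
    have hsp : 0 < s := Real.sqrt_pos.2 (by positivity)
    have hss : s * s = ((β+2:ℕ):ℝ) := Real.mul_self_sqrt (by positivity)
    have hb0 : (0:ℝ) ≤ (β:ℝ) := Nat.cast_nonneg β
    have hc1 : 2*((β:ℝ)+2)-1 ≠ 0 := by nlinarith
    have hc2 : 2*((β:ℝ)+2)-2 ≠ 0 := by nlinarith
    have hcc : ((β:ℝ)+2) ≠ 0 := by nlinarith
    have hF1 : ((β+1).factorial : ℝ) ≠ 0 := by positivity
    have key : Kf (β+2) * G (β+2) = ((β+2:ℕ):ℝ) *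
        ((W/x^2) * ((((2*(β+2)).factorial : ℕ):ℝ) / ((((β+2).factorial : ℕ):ℝ)^2 * 4^(β+2)))
          * (2*((β+2:ℕ):ℝ)^2 / ((2*((β+2:ℕ):ℝ)-1)*(2*((β+2:ℕ):ℝ)-2)))) := by
      rw [hGval (β+2) (by omega)]
      simp only [hKf_def]
      rw [show 2*(β+2)-3 = 2*β+1 from by omega, show 2*(β+2)-2 = 2*β+2 from by omega]
      rw [hfact2, hfactN]
      rw [show (4:ℝ)^(β+2) = 2^(2*β+4) by
        rw [show (4:ℝ) = 2^2 by norm_num, ← pow_mul, show 2*(β+2) = 2*β+4 from by omega]]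
      rw [show 2*(β+2) = 2*β+4 from by omega]
      rw [hΓval, hβ2]
      exact auxKeyB W x _ _ ((β:ℝ)+2) β hx.ne' hF1 hc1 hc2 hcc
    have hmul : (Kf (β+2) * G (β+2) / s) * s
        = ((W/x^2) * ((((2*(β+2)).factorial : ℕ):ℝ) * s / ((((β+2).factorial : ℕ):ℝ)^2 * 4^(β+2)))
          * (2*((β+2:ℕ):ℝ)^2 / ((2*((β+2:ℕ):ℝ)-1)*(2*((β+2:ℕ):ℝ)-2)))) * s := by
      rw [div_mul_cancel₀ _ hsp.ne', key, ← hss]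
      ring
    have hfin := mul_right_cancel₀ hsp.ne' hmul
    rw [hfin, hβ2]
  have hB : Tendsto (fun α : ℕ => Kf α * G α / Real.sqrt (α:ℝ)) atTop
      (𝓝 ((W/x^2) * (1/Real.sqrt π) * (1/2))) := by
    have hbase : Tendsto (fun α : ℕ => (W/x^2)
        * (((2*α).factorial : ℝ) * Real.sqrt (α:ℝ) / ((α.factorial:ℝ)^2 * 4^α))
        * (2*(α:ℝ)^2 / ((2*(α:ℝ)-1)*(2*(α:ℝ)-2)))) atTop
        (𝓝 ((W/x^2) * (1/Real.sqrt π) * (1/2))) :=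
      (tendsto_const_nhds.mul auxCB).mul hB2
    refine hbase.congr' ?_
    filter_upwards [eventually_ge_atTop 2] with α hα
    exact (hBeq α hα).symm
  -- Claim A : concentration
  have h4x : (0:ℝ) < 4/x := by positivity
  set ψ : ℝ → ℝ := fun y => (1/x) * (y^1 * Real.exp (-(4/x * y))) with hψ_def
  have hψ_eval : ∀ y : ℝ, ψ y = y/x * Real.exp (-(4/x * y)) := by
    intro y; simp only [hψ_def, pow_one]; ring
  have hψ_int : IntegrableOn ψ (Set.Ioi 0) volume := by
    rw [hψ_def]
    exact (auxGint 1 h4x).const_mul _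
  have hψ_cont : Continuous ψ := by
    rw [hψ_def]
    apply continuous_const.mul
    exact (continuous_pow 1).mul
      (Real.continuous_exp.comp (continuous_const.mul continuous_id).neg)
  have hψ_nonneg : ∀ y : ℝ, 0 < y → 0 ≤ ψ y := by
    intro y hy
    rw [hψ_eval]
    positivity
  have hψ_le : ∀ y : ℝ, 0 < y → ψ y ≤ 1/4 := by
    intro y hy
    have hwb := auxWB 1 h4x hy.le
    have hx4 : ((Nat.factorial 1 : ℕ):ℝ)/(4/x)^1 = x/4 := by
      rw [pow_one, show ((Nat.factorial 1 : ℕ):ℝ) = 1 by norm_num [Nat.factorial], one_div_div]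
    rw [hx4] at hwb
    calc ψ y = (1/x) * (y^1 * Real.exp (-(4/x*y))) := by rw [hψ_def]
      _ ≤ (1/x) * (x/4) := mul_le_mul_of_nonneg_left hwb (by positivity)
      _ = 1/4 := by field_simp
  set bd : ℝ → ℝ := fun y => ψ y * f y + ψ y * f x with hbd_def
  have hbd_int : IntegrableOn bd (Set.Ioi 0) volume := by
    apply Integrable.add
    · apply Integrable.mono' (g := fun y => (1/4) * f y) (hfint.const_mul _)
        ((hψ_cont.aestronglyMeasurable).mul hfae.aestronglyMeasurable)
      rw [ae_restrict_iff' measurableSet_Ioi]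
      refine ae_of_all _ fun y hy => ?_
      have hy0 : (0:ℝ) < y := hy
      have hfy := hf_nonneg y hy0.le
      simp only [Pi.mul_apply]
      rw [Real.norm_eq_abs, abs_mul, abs_of_nonneg (hψ_nonneg y hy0), abs_of_nonneg hfy]
      exact mul_le_mul_of_nonneg_right (hψ_le y hy0) hfy
    · exact hψ_int.mul_const _
  have hbd_nonneg : ∀ y ∈ Set.Ioi (0:ℝ), 0 ≤ bd y := by
    intro y hy
    have hy0 : (0:ℝ) < y := hy
    exact add_nonneg (mul_nonneg (hψ_nonneg y hy0) (hf_nonneg y hy0.le))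
      (mul_nonneg (hψ_nonneg y hy0) hfx.le)
  set D : ℝ := ∫ y in Set.Ioi (0:ℝ), bd y with hD_def
  have hD0 : 0 ≤ D := setIntegral_nonneg measurableSet_Ioi hbd_nonneg
  have hA : Tendsto (fun α : ℕ => I α / G α) atTop (𝓝 (f x)) := by
    rw [Metric.tendsto_atTop]
    intro ε hε
    have hcx : ContinuousAt f x := (hfc x hx.le).continuousAt (Ici_mem_nhds hx)
    obtain ⟨δ0, hδ0, hδ0p⟩ := Metric.continuousAt_iff.1 hcx (ε/4) (by positivity)
    set δ : ℝ := min (δ0/2) (x/2) with hδ_def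
    have hδpos : 0 < δ := lt_min (by positivity) (by positivity)
    have hδx : δ < x := lt_of_le_of_lt (min_le_right _ _) (by linarith)
    have hδδ0 : δ < δ0 := lt_of_le_of_lt (min_le_left _ _) (by linarith)
    have hnear : ∀ y : ℝ, |y - x| ≤ δ → |f y - f x| ≤ ε/4 := by
      intro y hyx
      have hd : dist y x < δ0 := by rw [Real.dist_eq]; linarith
      have := hδ0p hd
      rw [Real.dist_eq] at this
      linarith
    set d : ℝ := δ/x with hd_def
    have hd0 : 0 < d := by positivity
    have hd1 : d < 1 := by rw [hd_def, div_lt_one hx]; exact hδx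
    set q : ℝ := max ((1-d) * Real.exp (-(1-d))) ((1+d) * Real.exp (-(1+d))) with hq_def
    have hq0 : 0 < q := auxQpos hd0 hd1
    set ρ : ℝ := q * Real.exp 1 with hρ_def
    have hρ0 : 0 ≤ ρ := by positivity
    have hρ1 : ρ < 1 := auxQlt hd0 hd1
    set C0 : ℝ := (D/x) * (Real.exp 3 * Real.exp 1) with hC0_def
    have hC00 : 0 ≤ C0 := by positivity
    have htail := auxTail hρ0 hρ1 C0
    obtain ⟨N1, hN1⟩ := (Metric.tendsto_atTop.1 htail) (ε/4) (by positivity)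
    refine ⟨max (N1+4) 4, fun α hα => ?_⟩
    have hα4 : 4 ≤ α := le_trans (le_max_right _ _) hα
    have hαN : N1 + 4 ≤ α := le_trans (le_max_left _ _) hα
    have hα2 : 2 ≤ α := by omega
    have hGa := hGpos α hα2
    have hcast : ((2*α-4:ℕ):ℝ) + 4 = 2*(α:ℝ) := by
      push_cast [Nat.cast_sub (show 4 ≤ 2*α by omega)]
      ring
    have hptw : ∀ y ∈ Set.Ioi (0:ℝ),
        ‖w α y * f y - f x * w α y‖ ≤ ε/4 * w α y + (x^(2*α-3)*q^(2*α-4)) * bd y := by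
      intro y hy
      have hy0 : (0:ℝ) < y := hy
      have hfy := hf_nonneg y hy0.le
      have hwny := hw_nonneg α y hy0.le
      have hlhs : ‖w α y * f y - f x * w α y‖ = |f y - f x| * w α y := by
        rw [show w α y * f y - f x * w α y = (f y - f x) * w α y by ring,
          Real.norm_eq_abs, abs_mul, abs_of_nonneg hwny]
      rw [hlhs]
      rcases le_or_gt (|y - x|) δ with hcase | hcase
      · have h1 : |f y - f x| * w α y ≤ ε/4 * w α y :=
          mul_le_mul_of_nonneg_right (hnear y hcase) hwny
        have h2 : 0 ≤ (x^(2*α-3)*q^(2*α-4)) * bd y :=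
          mul_nonneg (by positivity) (hbd_nonneg y hy)
        exact h1.trans (le_add_of_nonneg_right h2)
      · have ht0 : 0 < y/x := by positivity
        have hfar : d ≤ |y/x - 1| := by
          rw [show y/x - 1 = (y-x)/x by field_simp, abs_div, abs_of_pos hx, hd_def]
          gcongr
        have hfp := auxFarPow hd0 hd1 ht0 hfar (2*α-4)
        rw [← hq_def] at hfp
        have hwid : w α y = x^(2*α-3)
            * ((y/x)^(2*α-4+1) * Real.exp (-((((2*α-4:ℕ):ℝ)+4) * (y/x)))) := by
          simp only [hw_def]
          rw [show 2*α-4+1 = 2*α-3 from by omega, div_pow, hcast]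
          rw [show 2*(α:ℝ) * (y/x) = 2*(α:ℝ)/x*y by ring]
          field_simp
        have hwle : w α y ≤ (x^(2*α-3)*q^(2*α-4)) * ψ y := by
          rw [hwid, hψ_eval]
          calc x^(2*α-3) * ((y/x)^(2*α-4+1) * Real.exp (-((((2*α-4:ℕ):ℝ)+4) * (y/x))))
              ≤ x^(2*α-3) * (q^(2*α-4) * (y/x * Real.exp (-(4*(y/x))))) :=
                mul_le_mul_of_nonneg_left hfp (by positivity)
            _ = (x^(2*α-3)*q^(2*α-4)) * (y/x * Real.exp (-(4/x*y))) := by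
                rw [show -(4*(y/x)) = -(4/x*y) by ring]
                ring
        have h3 : |f y - f x| * w α y ≤ (f y + f x) * w α y := by
          apply mul_le_mul_of_nonneg_right _ hwny
          calc |f y - f x| ≤ |f y| + |f x| := abs_sub _ _
            _ = f y + f x := by rw [abs_of_nonneg hfy, abs_of_nonneg hfx.le]
        have h4 : (f y + f x) * w α y ≤ (x^(2*α-3)*q^(2*α-4)) * bd y := by
          calc (f y + f x) * w α y ≤ (f y + f x) * ((x^(2*α-3)*q^(2*α-4)) * ψ y) :=
                mul_le_mul_of_nonneg_left hwle (by positivity)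
            _ = (x^(2*α-3)*q^(2*α-4)) * bd y := by
                simp only [hbd_def]
                ring
        have h5 : 0 ≤ ε/4 * w α y := by positivity
        exact (h3.trans h4).trans (le_add_of_nonneg_left h5)
    have hsub : I α - f x * G α = ∫ y in Set.Ioi (0:ℝ), (w α y * f y - f x * w α y) := by
      rw [integral_sub (hIint α (by omega)) ((hwint α (by omega)).const_mul (f x)),
        integral_const_mul]
    have hBint : IntegrableOn
        (fun y => ε/4 * w α y + (x^(2*α-3)*q^(2*α-4)) * bd y) (Set.Ioi 0) volume :=
      ((hwint α (by omega)).const_mul _).add (hbd_int.const_mul _)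
    have hnorm : ‖∫ y in Set.Ioi (0:ℝ), (w α y * f y - f x * w α y)‖
        ≤ ∫ y in Set.Ioi (0:ℝ), (ε/4 * w α y + (x^(2*α-3)*q^(2*α-4)) * bd y) := by
      apply norm_integral_le_of_norm_le hBint
      rw [ae_restrict_iff' measurableSet_Ioi]
      exact ae_of_all _ hptw
    have hval : ∫ y in Set.Ioi (0:ℝ), (ε/4 * w α y + (x^(2*α-3)*q^(2*α-4)) * bd y)
        = ε/4 * G α + (x^(2*α-3)*q^(2*α-4)) * D := by
      rw [integral_add ((hwint α (by omega)).const_mul _) (hbd_int.const_mul _),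
        integral_const_mul, integral_const_mul]
    have habs : |I α - f x * G α| ≤ ε/4 * G α + (x^(2*α-3)*q^(2*α-4)) * D := by
      rw [hsub, ← Real.norm_eq_abs]
      exact le_trans hnorm (le_of_eq hval)
    -- tail bound
    have hm1 : 1 ≤ 2*α-3 := by omega
    have hGround : G α = ((2*α-3).factorial : ℝ)
        / ((((2*α-3:ℕ):ℝ)+3)/x)^((2*α-3)+1) := by
      rw [hGval α hα2,
        show ((2*α-3:ℕ):ℝ)+3 = 2*(α:ℝ) by
          push_cast [Nat.cast_sub (show 3 ≤ 2*α by omega)]; ring,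
        show (2*α-3)+1 = 2*α-2 from by omega]
    have htb := auxTailBound hx hq0 hD0 (2*α-3) hm1
    rw [show (2*α-3)-1 = 2*α-4 from by omega, ← hGround] at htb
    have hTail : (x^(2*α-3)*q^(2*α-4)) * D / G α
        ≤ C0 * ((((2*α-4:ℕ):ℝ)+4) * ρ^(2*α-4)) := by
      calc (x^(2*α-3)*q^(2*α-4)) * D / G α = x^(2*α-3)*q^(2*α-4)*D / G α := by ring_nf
        _ ≤ (D/x) * (Real.exp 3 * Real.exp 1) * ((((2*α-4:ℕ):ℝ)+4) * (q*Real.exp 1)^(2*α-4)) :=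
            htb
        _ = C0 * ((((2*α-4:ℕ):ℝ)+4) * ρ^(2*α-4)) := by rw [hC0_def, hρ_def]
    have hkN : N1 ≤ 2*α-4 := by omega
    have htn := hN1 (2*α-4) hkN
    rw [Real.dist_eq, sub_zero, abs_of_nonneg (by positivity)] at htn
    -- conclude
    rw [Real.dist_eq]
    have hIG : I α / G α - f x = (I α - f x * G α) / G α := by
      field_simp [hGa.ne']
    rw [hIG, abs_div, abs_of_pos hGa]
    calc |I α - f x * G α| / G α
        ≤ (ε/4 * G α + (x^(2*α-3)*q^(2*α-4)) * D) / G α := by gcongr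
      _ = ε/4 + (x^(2*α-3)*q^(2*α-4)) * D / G α := by
          rw [add_div, mul_div_cancel_right₀ _ hGa.ne']
      _ < ε := by linarith [hTail, htn]
  -- final assembly
  have hfinal := hA.mul hB
  have hlim : f x * ((W/x^2) * (1/Real.sqrt π) * (1/2)) = W * f x / (2*Real.sqrt π * x^2) := by
    have hπ : Real.sqrt π ≠ 0 := by positivity
    field_simp
  rw [hlim] at hfinal
  refine hfinal.congr' ?_
  filter_upwards [eventually_ge_atTop 2] with α hα
  have hsq : Real.sqrt (α:ℝ) ≠ 0 := by
    have : (0:ℝ) < (α:ℝ) := by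
      have : (2:ℝ) ≤ (α:ℝ) := by exact_mod_cast hα
      linarith
    positivity
  rw [hE α hα]
  have hGa := (hGpos α hα).ne'
  field_simp [hGa, hsq]
end

section
/- (Display (5.8)) As the integer α → ∞, the second moment of L₁ satisfies E L₁² = (W/(2√π)) · (√α / x) · S(x) + o(√α); equivalently, α^{−1/2} · E L₁² → W S(x) / (2√π x). -/
open MeasureTheory ProbabilityTheory Filter
open scoped Topology ENNReal NNReal Real

-- auxiliary: Gamma-type moments
lemma stmt13_int_pow_exp (k : ℕ) {b : ℝ} (hb : 0 < b) :
    ∫ y in Set.Ioi (0:ℝ), y ^ k * Real.exp (-(b * y)) = (Nat.factorial k : ℝ) / b ^ (k + 1) := by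
  have h := Real.integral_rpow_mul_exp_neg_mul_Ioi (a := (k:ℝ) + 1) (r := b) (by positivity) hb
  rw [show ((k:ℝ) + 1 - 1) = (k:ℝ) by ring] at h
  rw [setIntegral_congr_fun measurableSet_Ioi
      (fun y (hy : y ∈ Set.Ioi (0:ℝ)) => by rw [← Real.rpow_natCast y k]), h,
    show ((k:ℝ)+1) = ((k+1 : ℕ):ℝ) by push_cast; ring, Real.rpow_natCast]
  rw [show (((k+1:ℕ)):ℝ) = (k:ℝ)+1 by push_cast; ring, Real.Gamma_nat_eq_factorial,
    one_div, inv_pow, inv_mul_eq_div]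

lemma stmt13_intg_pow_exp (k : ℕ) {b : ℝ} (hb : 0 < b) :
    IntegrableOn (fun y : ℝ => y ^ k * Real.exp (-(b * y))) (Set.Ioi 0) := by
  have h := integrableOn_rpow_mul_exp_neg_mul_rpow (p := 1) (s := (k:ℝ)) (b := b)
    (by exact lt_of_lt_of_le neg_one_lt_zero (Nat.cast_nonneg k)) one_pos hb
  refine h.congr_fun (fun y (hy : y ∈ Set.Ioi (0:ℝ)) => ?_) measurableSet_Ioi
  beta_reduce
  rw [Real.rpow_natCast, Real.rpow_one, neg_mul]

noncomputable def stmt13K (n : ℕ) : ℝ :=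
  Real.sqrt ((n:ℝ)+1) * ((2*n).factorial : ℝ) / (2^(2*n+1) * ((n.factorial:ℝ))^2)

lemma stmt13_tendsto_K :
    Tendsto stmt13K atTop (𝓝 (1/(2*Real.sqrt π))) := by
  unfold stmt13K
  have hst := Stirling.tendsto_stirlingSeq_sqrt_pi
  -- identity for n ≥ 1
  have hid : ∀ n : ℕ, 1 ≤ n →
      Real.sqrt ((n:ℝ)+1) * ((2*n).factorial : ℝ) / (2 ^ (2*n+1) * ((n.factorial : ℝ))^2)
      = Stirling.stirlingSeq (2*n) / (Stirling.stirlingSeq n)^2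
        * (Real.sqrt ((n:ℝ)+1) / (2 * Real.sqrt (n:ℝ))) := by
    intro n hn
    have hn0 : (0:ℝ) < (n:ℝ) := by exact_mod_cast hn
    have hs1 : Real.sqrt (n:ℝ) ^ 2 = (n:ℝ) := Real.sq_sqrt hn0.le
    have hs1ne : Real.sqrt (n:ℝ) ≠ 0 := by positivity
    have hs2 : Real.sqrt (2*(n:ℝ)) ^ 2 = 2*(n:ℝ) := Real.sq_sqrt (by positivity)
    have hs2ne : Real.sqrt (2*(n:ℝ)) ≠ 0 := by
      refine Real.sqrt_ne_zero'.2 (by positivity)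
    have hs4 : Real.sqrt (2*((2*n:ℕ):ℝ)) = 2 * Real.sqrt (n:ℝ) := by
      push_cast
      rw [show 2*(2*(n:ℝ)) = 2^2 * n by ring, Real.sqrt_mul (by positivity),
        Real.sqrt_sq (by norm_num)]
    have hfac : (n.factorial : ℝ)
        = Stirling.stirlingSeq n * (Real.sqrt (2*(n:ℝ)) * ((n:ℝ)/Real.exp 1)^n) := by
      rw [Stirling.stirlingSeq]
      field_simp
    have hfac2 : ((2*n).factorial : ℝ)
        = Stirling.stirlingSeq (2*n) * (Real.sqrt (2*((2*n:ℕ):ℝ)) * (((2*n:ℕ):ℝ)/Real.exp 1)^(2*n)) := by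
      rw [Stirling.stirlingSeq]
      have : ((2*n:ℕ):ℝ) ≠ 0 := by positivity
      field_simp
    have hpow : (((2*n:ℕ):ℝ)/Real.exp 1)^(2*n) = 2^(2*n) * (((n:ℝ)/Real.exp 1)^n)^2 := by
      push_cast
      rw [show (2*(n:ℝ))/Real.exp 1 = 2 * ((n:ℝ)/Real.exp 1) by ring, mul_pow,
        ← pow_mul, mul_comm n 2]
    have hstn : (0:ℝ) < Stirling.stirlingSeq n := by
      obtain ⟨m, rfl⟩ := Nat.exists_eq_add_of_le hn
      simpa [add_comm] using Stirling.stirlingSeq'_pos m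
    have hpn : (0:ℝ) < ((n:ℝ)/Real.exp 1)^n := by positivity
    rw [hfac2, hfac, hs4, hpow]
    field_simp
    ring_nf
    rw [Real.sq_sqrt hn0.le, Real.sq_sqrt (by positivity : (0:ℝ) ≤ (n:ℝ)*2)]
    ring
  have h2n : Tendsto (fun n : ℕ => 2*n) atTop atTop :=
    tendsto_atTop_mono (fun n => (by omega : n ≤ 2*n)) tendsto_id
  have hA : Tendsto (fun n : ℕ => Stirling.stirlingSeq (2*n) / (Stirling.stirlingSeq n)^2)
      atTop (𝓝 (Real.sqrt π / π)) := by
    have h := (hst.comp h2n).div (hst.pow 2) (by positivity)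
    rwa [Real.sq_sqrt Real.pi_pos.le] at h
  have hq : Tendsto (fun n : ℕ => ((n:ℝ)+1)/(n:ℝ)) atTop (𝓝 1) := by
    have h := tendsto_const_nhds.add tendsto_one_div_atTop_nhds_zero_nat (f := fun _ : ℕ => (1:ℝ))
    rw [add_zero] at h
    refine h.congr' ?_
    filter_upwards [eventually_ge_atTop 1] with n hn
    have : (n:ℝ) ≠ 0 := by positivity
    field_simp
  have hB : Tendsto (fun n : ℕ => Real.sqrt ((n:ℝ)+1) / (2 * Real.sqrt (n:ℝ)))
      atTop (𝓝 (1/2)) := by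
    have h := ((Real.continuous_sqrt.tendsto 1).comp hq).div_const 2
    rw [Real.sqrt_one] at h
    refine h.congr' ?_
    filter_upwards [eventually_ge_atTop 1] with n hn
    have hn0 : (0:ℝ) < (n:ℝ) := by exact_mod_cast hn
    simp only [Function.comp]
    rw [Real.sqrt_div (by positivity)]
    rw [div_div, mul_comm (Real.sqrt (n:ℝ)) 2]
  have hval : Real.sqrt π / π * (1/2) = 1/(2*Real.sqrt π) := by
    nth_rewrite 2 [← Real.sq_sqrt Real.pi_pos.le]
    have hne : Real.sqrt π ≠ 0 := by positivity
    field_simp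
  rw [← hval]
  refine Tendsto.congr' ?_ (hA.mul hB)
  filter_upwards [eventually_ge_atTop 1] with n hn
  exact (hid n hn).symm


set_option maxHeartbeats 2000000 in
theorem stmt_13
    {Ω : Type*} [MeasurableSpace Ω] (P : Measure Ω) [IsProbabilityMeasure P]
    (F f f' : ℝ → ℝ)
    (hF0 : F 0 = 0)
    (hF_mono : MonotoneOn F (Set.Ici 0))
    (hF_lim : Tendsto F atTop (𝓝 1))
    (hF_deriv : ∀ t ∈ Set.Ici (0:ℝ), HasDerivWithinAt F (f t) (Set.Ici 0) t)
    (hf_deriv : ∀ t ∈ Set.Ici (0:ℝ), HasDerivWithinAt f (f' t) (Set.Ici 0) t)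
    (hf'_cont : ContinuousOn f' (Set.Ici 0))
    (hf'_bdd : ∃ C : ℝ, ∀ t ∈ Set.Ici (0:ℝ), |f' t| ≤ C)
    (W : ℝ) (hW_pos : 0 < W)
    (hW_int : IntegrableOn (fun y => 1 - F y) (Set.Ioi 0) volume)
    (hW : W = ∫ y in Set.Ioi (0:ℝ), (1 - F y))
    (g : ℝ → ℝ) (hg : ∀ y, g y = (1 - F y) / W)
    (Y : ℕ → Ω → ℝ)
    (hY_meas : ∀ i, Measurable (Y i))
    (hY_indep : iIndepFun Y P)
    (hY_law : ∀ i, P.map (Y i)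
      = (volume.restrict (Set.Ioi 0)).withDensity (fun y => ENNReal.ofReal (g y)))
    (x : ℝ) (hx : 0 < x)
    (L : ℕ → ℕ → Ω → ℝ)
    (hL : ∀ (α i : ℕ) (ω : Ω), L α i ω
      = W / Y i ω * (1 / Real.Gamma (α : ℝ)) * ((α : ℝ) * Y i ω / x) ^ α
        * Real.exp (-((α : ℝ) * Y i ω / x)))
    : Tendsto (fun α : ℕ => (∫ ω, (L α 0 ω) ^ 2 ∂P) / Real.sqrt (α : ℝ))
      atTop (𝓝 (W * (1 - F x) / (2 * Real.sqrt π * x))) := by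
  have hxne : x ≠ 0 := ne_of_gt hx
  have hWne : W ≠ 0 := ne_of_gt hW_pos
  have hFcont : ContinuousOn F (Set.Ici 0) := fun t ht => (hF_deriv t ht).continuousWithinAt
  have hFle : ∀ y : ℝ, 0 ≤ y → F y ≤ 1 := by
    intro y hy
    refine ge_of_tendsto hF_lim ?_
    filter_upwards [eventually_ge_atTop y, eventually_ge_atTop (0:ℝ)] with t ht ht0
    exact hF_mono hy ht0 ht
  have hFnn : ∀ y : ℝ, 0 ≤ y → 0 ≤ F y := by
    intro y hy
    rw [← hF0]
    exact hF_mono (Set.mem_Ici.2 le_rfl) hy hy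
  -- abbreviations
  set J : ℕ → ℝ := fun n =>
    ∫ y in Set.Ioi (0:ℝ), y^(2*n) * Real.exp (-(2*((n:ℝ)+1)/x * y)) * (1 - F y) with hJdef
  set Nn : ℕ → ℝ := fun n => (((2*n).factorial : ℝ)) / (2*((n:ℝ)+1)/x)^(2*n+1) with hNdef
  have hb : ∀ n : ℕ, (0:ℝ) < 2*((n:ℝ)+1)/x := fun n => by positivity
  have hNpos : ∀ n : ℕ, 0 < Nn n := fun n => by
    rw [hNdef]
    have := hb n
    positivity
  have hNval : ∀ n : ℕ,
      (∫ y in Set.Ioi (0:ℝ), y^(2*n) * Real.exp (-(2*((n:ℝ)+1)/x * y))) = Nn n := by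
    intro n
    rw [stmt13_int_pow_exp (2*n) (hb n), hNdef]
  -- the second moment identity
  have hEL : ∀ n : ℕ, (∫ ω, (L (n+1) 0 ω) ^ 2 ∂P)
      = (W * (1/((n.factorial:ℝ)))^2 * (((n:ℝ)+1)/x)^(2*(n+1))) * J n := by
    intro n
    set φ : ℝ → ℝ := fun y =>
      (W / y * (1 / Real.Gamma (((n+1:ℕ)) : ℝ)) * ((((n+1:ℕ)) : ℝ) * y / x) ^ (n+1)
        * Real.exp (-((((n+1:ℕ)) : ℝ) * y / x))) ^ 2 with hφdef
    have hφm : Measurable φ := by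
      apply Measurable.pow_const
      exact (((measurable_const.div measurable_id).mul measurable_const).mul
        ((measurable_const.mul measurable_id).div_const x |>.pow_const _)).mul
        (Real.measurable_exp.comp ((measurable_const.mul measurable_id).div_const x).neg)
    have hgm : AEMeasurable (fun y => (g y).toNNReal) (volume.restrict (Set.Ioi 0)) := by
      have h1 : (fun y => (g y).toNNReal) = fun y => ((1 - F y)/W).toNNReal := by
        funext y; rw [hg]
      rw [h1]
      exact measurable_real_toNNReal.comp_aemeasurable
        ((((continuousOn_const.sub hFcont).div_const W).mono
          Set.Ioi_subset_Ici_self).aemeasurable measurableSet_Ioi)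
    calc ∫ ω, (L (n+1) 0 ω) ^ 2 ∂P = ∫ ω, φ (Y 0 ω) ∂P := by
          refine integral_congr_ae (ae_of_all _ (fun ω => ?_))
          simp only [hL, hφdef]
      _ = ∫ y, φ y ∂(P.map (Y 0)) :=
          (integral_map (hY_meas 0).aemeasurable hφm.aestronglyMeasurable).symm
      _ = ∫ y, φ y ∂((volume.restrict (Set.Ioi 0)).withDensity
            fun y => ENNReal.ofReal (g y)) := by rw [hY_law 0]
      _ = ∫ y in Set.Ioi (0:ℝ), (g y).toNNReal • φ y :=
          integral_withDensity_eq_integral_smul₀ hgm φ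
      _ = ∫ y in Set.Ioi (0:ℝ), (W * (1/((n.factorial:ℝ)))^2 * (((n:ℝ)+1)/x)^(2*(n+1)))
            * (y^(2*n) * Real.exp (-(2*((n:ℝ)+1)/x * y)) * (1 - F y)) := by
          refine setIntegral_congr_fun measurableSet_Ioi (fun y hy => ?_)
          have hy0 : (0:ℝ) < y := hy
          have hgy : 0 ≤ g y := by
            rw [hg]
            exact div_nonneg (by linarith [hFle y hy0.le]) hW_pos.le
          have hsm : ((g y).toNNReal : ℝ≥0) • φ y = g y * φ y := by
            rw [NNReal.smul_def, smul_eq_mul, Real.coe_toNNReal _ hgy]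
          rw [hsm]
          simp only [hφdef, hg]
          have hGamma : Real.Gamma (((n+1:ℕ)):ℝ) = (n.factorial:ℝ) := by
            rw [show (((n+1:ℕ)):ℝ) = (n:ℝ)+1 by push_cast; ring,
              Real.Gamma_nat_eq_factorial]
          have hexp2 : Real.exp (-((((n+1:ℕ)):ℝ) * y / x)) ^ 2
              = Real.exp (-(2*((n:ℝ)+1)/x * y)) := by
            rw [sq, ← Real.exp_add]
            congr 1
            push_cast
            ring
          rw [mul_pow _ (Real.exp _), hexp2, hGamma,
            show (((n+1:ℕ)):ℝ) * y / x = ((((n+1:ℕ)):ℝ)/x) * y by ring,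
            mul_pow ((((n+1:ℕ)):ℝ)/x) y (n+1)]
          have hfacne : ((n.factorial:ℝ)) ≠ 0 := by positivity
          have hyne : y ≠ 0 := ne_of_gt hy0
          push_cast
          field_simp
          ring
      _ = (W * (1/((n.factorial:ℝ)))^2 * (((n:ℝ)+1)/x)^(2*(n+1))) * J n := by
          rw [integral_const_mul, hJdef]
  -- variance-type integral
  have hVar : ∀ n : ℕ,
      (∫ y in Set.Ioi (0:ℝ), (y^(2*n) * Real.exp (-(2*((n:ℝ)+1)/x * y))) * (y-x)^2)
        = Nn n * (x^2 / (2*((n:ℝ)+1))) := by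
    intro n
    have hbn := hb n
    have hEq : Set.EqOn
        (fun y : ℝ => (y^(2*n+2) * Real.exp (-(2*((n:ℝ)+1)/x * y))
            + x^2 * (y^(2*n) * Real.exp (-(2*((n:ℝ)+1)/x * y))))
          - 2*x*(y^(2*n+1) * Real.exp (-(2*((n:ℝ)+1)/x * y))))
        (fun y : ℝ => (y^(2*n) * Real.exp (-(2*((n:ℝ)+1)/x * y))) * (y-x)^2)
        (Set.Ioi 0) := by
      intro y hy
      simp only
      ring
    have hI0 : IntegrableOn (fun y : ℝ => y^(2*n+2) * Real.exp (-(2*((n:ℝ)+1)/x * y)))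
        (Set.Ioi 0) := stmt13_intg_pow_exp (2*n+2) hbn
    have hI1 : IntegrableOn (fun y : ℝ => x^2 * (y^(2*n) * Real.exp (-(2*((n:ℝ)+1)/x * y))))
        (Set.Ioi 0) := (stmt13_intg_pow_exp (2*n) hbn).const_mul (x^2)
    have hI2 : IntegrableOn (fun y : ℝ => 2*x*(y^(2*n+1) * Real.exp (-(2*((n:ℝ)+1)/x * y))))
        (Set.Ioi 0) := (stmt13_intg_pow_exp (2*n+1) hbn).const_mul (2*x)
    have hI01 : IntegrableOn (fun y : ℝ => y^(2*n+2) * Real.exp (-(2*((n:ℝ)+1)/x * y))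
        + x^2 * (y^(2*n) * Real.exp (-(2*((n:ℝ)+1)/x * y)))) (Set.Ioi 0) := hI0.add hI1
    rw [← setIntegral_congr_fun measurableSet_Ioi hEq,
      integral_sub hI01 hI2, integral_add hI0 hI1,
      integral_const_mul, integral_const_mul,
      stmt13_int_pow_exp (2*n+2) hbn, stmt13_int_pow_exp (2*n+1) hbn,
      stmt13_int_pow_exp (2*n) hbn, hNdef]
    have h1 : Nat.factorial (2*n+2) = (2*n+2) * ((2*n+1) * Nat.factorial (2*n)) := by
      rw [show 2*n+2 = (2*n+1)+1 from rfl, Nat.factorial_succ, Nat.factorial_succ]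
    have h2 : Nat.factorial (2*n+1) = (2*n+1) * Nat.factorial (2*n) := Nat.factorial_succ _
    rw [h1, h2]
    have hne : (2*((n:ℝ)+1)/x) ≠ 0 := ne_of_gt hbn
    have hn1 : ((n:ℝ)+1) ≠ 0 := by positivity
    simp only [div_pow]
    field_simp
    push_cast
    ring
  have hVarInt : ∀ n : ℕ, IntegrableOn
      (fun y : ℝ => (y^(2*n) * Real.exp (-(2*((n:ℝ)+1)/x * y))) * (y-x)^2) (Set.Ioi 0) := by
    intro n
    have hbn := hb n
    have hEq : Set.EqOn
        (fun y : ℝ => (y^(2*n+2) * Real.exp (-(2*((n:ℝ)+1)/x * y))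
            + x^2 * (y^(2*n) * Real.exp (-(2*((n:ℝ)+1)/x * y))))
          - 2*x*(y^(2*n+1) * Real.exp (-(2*((n:ℝ)+1)/x * y))))
        (fun y : ℝ => (y^(2*n) * Real.exp (-(2*((n:ℝ)+1)/x * y))) * (y-x)^2)
        (Set.Ioi 0) := by
      intro y hy
      simp only
      ring
    have hI3 : IntegrableOn (fun y : ℝ => (y^(2*n+2) * Real.exp (-(2*((n:ℝ)+1)/x * y))
        + x^2 * (y^(2*n) * Real.exp (-(2*((n:ℝ)+1)/x * y))))
        - 2*x*(y^(2*n+1) * Real.exp (-(2*((n:ℝ)+1)/x * y)))) (Set.Ioi 0) :=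
      ((stmt13_intg_pow_exp (2*n+2) hbn).add
        ((stmt13_intg_pow_exp (2*n) hbn).const_mul (x^2))).sub
        ((stmt13_intg_pow_exp (2*n+1) hbn).const_mul (2*x))
    exact hI3.congr_fun hEq measurableSet_Ioi
  have hJInt : ∀ n : ℕ, IntegrableOn
      (fun y : ℝ => y^(2*n) * Real.exp (-(2*((n:ℝ)+1)/x * y)) * (1 - F y)) (Set.Ioi 0) := by
    intro n
    have hbn := hb n
    refine Integrable.mono' (stmt13_intg_pow_exp (2*n) hbn) ?_ ?_
    · exact (((continuous_pow _).mul
        (Real.continuous_exp.comp (continuous_const.mul continuous_id).neg)).continuousOn.mul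
        ((continuousOn_const.sub hFcont).mono Set.Ioi_subset_Ici_self)).aestronglyMeasurable
        measurableSet_Ioi
    · rw [ae_restrict_iff' measurableSet_Ioi]
      refine ae_of_all _ (fun y hy => ?_)
      have hy0 : (0:ℝ) < y := hy
      have hnn : (0:ℝ) ≤ y^(2*n) * Real.exp (-(2*((n:ℝ)+1)/x * y)) := by positivity
      rw [norm_mul, Real.norm_eq_abs, Real.norm_eq_abs, abs_of_nonneg hnn]
      refine mul_le_of_le_one_right hnn (abs_le.2 ⟨by linarith [hFle y hy0.le], by
        linarith [hFnn y hy0.le]⟩)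
  -- concentration
  have hR : Tendsto (fun n : ℕ => J n / Nn n) atTop (𝓝 (1 - F x)) := by
    rw [Metric.tendsto_atTop]
    intro ε hε
    obtain ⟨δ, hδpos, hδ⟩ := Metric.continuousWithinAt_iff.1
      (hFcont x (le_of_lt hx)) (ε/2) (by linarith)
    refine ⟨Nat.ceil (2*x^2/(ε*δ^2)), fun n hn => ?_⟩
    have hbn := hb n
    have hδne : δ ≠ 0 := ne_of_gt hδpos
    -- pointwise bound
    have hbound : ∀ y ∈ Set.Ioi (0:ℝ),
        ‖y^(2*n) * Real.exp (-(2*((n:ℝ)+1)/x * y)) * (1 - F y)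
          - (1 - F x) * (y^(2*n) * Real.exp (-(2*((n:ℝ)+1)/x * y)))‖
        ≤ (ε/2) * (y^(2*n) * Real.exp (-(2*((n:ℝ)+1)/x * y)))
          + (2/δ^2) * ((y^(2*n) * Real.exp (-(2*((n:ℝ)+1)/x * y))) * (y-x)^2) := by
      intro y hy
      have hy0 : (0:ℝ) < y := hy
      have hhnn : 0 ≤ y^(2*n) * Real.exp (-(2*((n:ℝ)+1)/x * y)) := by positivity
      have hEq : y^(2*n) * Real.exp (-(2*((n:ℝ)+1)/x * y)) * (1 - F y)
          - (1 - F x) * (y^(2*n) * Real.exp (-(2*((n:ℝ)+1)/x * y)))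
          = (y^(2*n) * Real.exp (-(2*((n:ℝ)+1)/x * y))) * (F x - F y) := by ring
      rw [hEq, Real.norm_eq_abs, abs_mul, abs_of_nonneg hhnn]
      have hterm2 : 0 ≤ (2/δ^2) * ((y^(2*n) * Real.exp (-(2*((n:ℝ)+1)/x * y))) * (y-x)^2) := by
        positivity
      by_cases hcase : |y - x| < δ
      · have hd : dist (F y) (F x) < ε/2 :=
          hδ (le_of_lt hy0) (by rw [Real.dist_eq]; exact hcase)
        rw [Real.dist_eq] at hd
        have habs : |F x - F y| ≤ ε/2 := by rw [abs_sub_comm]; exact hd.le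
        have := mul_le_mul_of_nonneg_left habs hhnn
        linarith
      · push_neg at hcase
        have h1 : δ^2 ≤ (y-x)^2 := by
          rw [← sq_abs (y-x)]
          exact pow_le_pow_left₀ hδpos.le hcase 2
        have habs : |F x - F y| ≤ 2 := by
          have h2 := hFle y hy0.le
          have h3 := hFnn y hy0.le
          have h4 := hFle x hx.le
          have h5 := hFnn x hx.le
          rw [abs_le]
          constructor <;> linarith
        have hA := mul_le_mul_of_nonneg_left habs hhnn
        have hB : (y^(2*n) * Real.exp (-(2*((n:ℝ)+1)/x * y))) * 2
            ≤ (2/δ^2) * ((y^(2*n) * Real.exp (-(2*((n:ℝ)+1)/x * y))) * (y-x)^2) := by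
          have hδ2 : (0:ℝ) < δ^2 := by positivity
          rw [show (2/δ^2) * ((y^(2*n) * Real.exp (-(2*((n:ℝ)+1)/x * y))) * (y-x)^2)
              = 2*((y^(2*n) * Real.exp (-(2*((n:ℝ)+1)/x * y))) * (y-x)^2)/δ^2 by ring,
            le_div_iff₀ hδ2]
          nlinarith [mul_nonneg hhnn (sub_nonneg.2 h1)]
        have hterm1 : 0 ≤ (ε/2) * (y^(2*n) * Real.exp (-(2*((n:ℝ)+1)/x * y))) := by positivity
        linarith
    -- integral bound
    have hIh : IntegrableOn (fun y : ℝ => y^(2*n) * Real.exp (-(2*((n:ℝ)+1)/x * y)))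
        (Set.Ioi 0) := stmt13_intg_pow_exp (2*n) hbn
    have hIbound : IntegrableOn (fun y : ℝ =>
        (ε/2) * (y^(2*n) * Real.exp (-(2*((n:ℝ)+1)/x * y)))
          + (2/δ^2) * ((y^(2*n) * Real.exp (-(2*((n:ℝ)+1)/x * y))) * (y-x)^2)) (Set.Ioi 0) :=
      (hIh.const_mul (ε/2)).add ((hVarInt n).const_mul (2/δ^2))
    have hdiff : J n - (1 - F x) * Nn n
        = ∫ y in Set.Ioi (0:ℝ), (y^(2*n) * Real.exp (-(2*((n:ℝ)+1)/x * y)) * (1 - F y)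
            - (1 - F x) * (y^(2*n) * Real.exp (-(2*((n:ℝ)+1)/x * y)))) := by
      rw [integral_sub (hJInt n) (hIh.const_mul (1 - F x)), integral_const_mul, hNval n, hJdef]
    have hnorm : |J n - (1 - F x) * Nn n|
        ≤ (ε/2) * Nn n + (2/δ^2) * (Nn n * (x^2/(2*((n:ℝ)+1)))) := by
      rw [hdiff, ← Real.norm_eq_abs]
      refine (norm_integral_le_of_norm_le hIbound
        ((ae_restrict_iff' measurableSet_Ioi).2 (ae_of_all _ hbound))).trans_eq ?_
      rw [integral_add (hIh.const_mul (ε/2)) ((hVarInt n).const_mul (2/δ^2)),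
        integral_const_mul, integral_const_mul, hNval n, hVar n]
    -- conclude
    have hNne : Nn n ≠ 0 := ne_of_gt (hNpos n)
    have hn1 : ((n:ℝ)+1) ≠ 0 := by positivity
    rw [Real.dist_eq, show J n / Nn n - (1 - F x) = (J n - (1 - F x) * Nn n) / Nn n by
      field_simp, abs_div, abs_of_pos (hNpos n)]
    have hle : |J n - (1 - F x) * Nn n| / Nn n
        ≤ ((ε/2) * Nn n + (2/δ^2) * (Nn n * (x^2/(2*((n:ℝ)+1))))) / Nn n :=
      (div_le_div_iff_of_pos_right (hNpos n)).2 hnorm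
    have heq2 : ((ε/2) * Nn n + (2/δ^2) * (Nn n * (x^2/(2*((n:ℝ)+1))))) / Nn n
        = ε/2 + x^2/(δ^2*((n:ℝ)+1)) := by
      field_simp
    have hc1 : 2*x^2/(ε*δ^2) ≤ ((Nat.ceil (2*x^2/(ε*δ^2)) : ℕ) : ℝ) := Nat.le_ceil _
    have hc2 : 2*x^2 ≤ ((Nat.ceil (2*x^2/(ε*δ^2)) : ℕ) : ℝ)*(ε*δ^2) := by
      rwa [div_le_iff₀ (show (0:ℝ) < ε*δ^2 by positivity)] at hc1
    have hc3 : ((Nat.ceil (2*x^2/(ε*δ^2)) : ℕ) : ℝ)*(ε*δ^2) < ((n:ℝ)+1)*(ε*δ^2) := by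
      have hlt : ((Nat.ceil (2*x^2/(ε*δ^2)) : ℕ) : ℝ) < (n:ℝ)+1 :=
        lt_of_le_of_lt (Nat.cast_le.2 hn) (lt_add_one _)
      exact mul_lt_mul_of_pos_right hlt (by positivity)
    have hfin : x^2/(δ^2*((n:ℝ)+1)) < ε/2 := by
      rw [div_lt_iff₀ (by positivity : (0:ℝ) < δ^2*((n:ℝ)+1)),
        show ε/2*(δ^2*((n:ℝ)+1)) = ((n:ℝ)+1)*(ε*δ^2)/2 by ring]
      linarith [lt_of_le_of_lt hc2 hc3]
    calc |J n - (1 - F x) * Nn n| / Nn n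
        ≤ ε/2 + x^2/(δ^2*((n:ℝ)+1)) := heq2 ▸ hle
      _ < ε := by linarith
  -- assembly
  have hπ : Real.sqrt π ≠ 0 := by
    have := Real.pi_pos
    positivity
  have hconst : W * (1 - F x) / (2 * Real.sqrt π * x)
      = (W/x) * ((1/(2*Real.sqrt π)) * (1 - F x)) := by
    rw [div_eq_iff (show (2*Real.sqrt π*x) ≠ 0 by positivity)]
    field_simp
    try exact Or.inl trivial
  rw [hconst]
  rw [← tendsto_add_atTop_iff_nat 1]
  have hlim : Tendsto (fun n : ℕ => (W/x) * (stmt13K n * (J n / Nn n))) atTop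
      (𝓝 ((W/x) * ((1/(2*Real.sqrt π)) * (1 - F x)))) :=
    tendsto_const_nhds.mul (stmt13_tendsto_K.mul hR)
  refine Tendsto.congr (fun n => ?_) hlim
  show (W/x) * (stmt13K n * (J n / Nn n))
      = (∫ ω, (L (n+1) 0 ω) ^ 2 ∂P) / Real.sqrt (((n+1:ℕ)):ℝ)
  rw [hEL n, show (((n+1:ℕ)):ℝ) = (n:ℝ)+1 by push_cast; ring]
  have hs : Real.sqrt ((n:ℝ)+1) ^ 2 = (n:ℝ)+1 := Real.sq_sqrt (by positivity)
  have hsne : Real.sqrt ((n:ℝ)+1) ≠ 0 := by positivity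
  have hNne : Nn n ≠ 0 := ne_of_gt (hNpos n)
  have hfne : ((n.factorial:ℝ)) ≠ 0 := by positivity
  have hn1 : ((n:ℝ)+1) ≠ 0 := by positivity
  have hCN : (W * (1/((n.factorial:ℝ)))^2 * (((n:ℝ)+1)/x)^(2*(n+1))) * Nn n
      = (W/x) * (((n:ℝ)+1) * (((2*n).factorial:ℝ)/(2^(2*n+1)*((n.factorial:ℝ))^2))) := by
    rw [hNdef]
    show _ * (((2*n).factorial:ℝ) / (2*((n:ℝ)+1)/x)^(2*n+1)) = _
    rw [show (2*((n:ℝ)+1)/x) = 2*(((n:ℝ)+1)/x) by ring, mul_pow, div_pow, div_pow]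
    field_simp
    rw [div_pow]
    field_simp
    ring
  have hJQ : J n = Nn n * (J n / Nn n) := (mul_div_cancel₀ _ hNne).symm
  rw [eq_div_iff hsne]
  simp only [stmt13K]
  linear_combination ((W/x) * ((((2*n).factorial:ℝ))/(2^(2*n+1)*((n.factorial:ℝ))^2))
      * (J n / Nn n)) * hs
    - (J n / Nn n) * hCN
    - (W * (1/((n.factorial:ℝ)))^2 * (((n:ℝ)+1)/x)^(2*(n+1))) * hJQ
end
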